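/- arXiv:1501.00051 — 5 statements merged into one kernel-verified Lean document; each statement's English description precedes it below -/
import Mathlib

section
/- Fix m, n ≥ 1 and consider the graph on S = [m]^n whose edges join s and F_i(s) whenever F_i(s) ≠ 0 (equivalently, join s and E_i(s) whenever E_i(s) ≠ 0), for i ∈ [m−1]. Then each connected component of this graph contains exactly one vertex v such that E_i(v) = 0 for every i ∈ [m−1]. -/
/-! ### Crystal operators on words -/

/-- The number of `i`'s minus the number of `(i+1)`'s among the first `k` letters of `w`
(viewing each `i` as a closing parenthesis and each `i+1` as an opening parenthesis). -/
def prefD (i : ℕ) (w : List ℕ) (k : ℕ) : ℤ :=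
  ((w.take k).count i : ℤ) - ((w.take k).count (i + 1) : ℤ)

/-- The number of `(i+1)`'s minus the number of `i`'s in the suffix of `w` starting at
position `k`. -/
def suffD (i : ℕ) (w : List ℕ) (k : ℕ) : ℤ :=
  ((w.drop k).count (i + 1) : ℤ) - ((w.drop k).count i : ℤ)

/-- Position `p` of `w` holds a letter `i` which, viewed as a closing parenthesis
(each `i+1` being an opening parenthesis, all other letters ignored), is unmatched in the
usual parenthesis matching. -/
def IsUnmatchedClose (i : ℕ) (w : List ℕ) (p : ℕ) : Prop :=
  w[p]? = some i ∧ ∀ q ≤ p, prefD i w q < prefD i w (p + 1)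

/-- Position `p` of `w` holds a letter `i+1` which, viewed as an opening parenthesis
(each `i` being a closing parenthesis, all other letters ignored), is unmatched in the
usual parenthesis matching. -/
def IsUnmatchedOpen (i : ℕ) (w : List ℕ) (p : ℕ) : Prop :=
  w[p]? = some (i + 1) ∧ ∀ q ≤ w.length, p < q → suffD i w q < suffD i w p

instance (i : ℕ) (w : List ℕ) (p : ℕ) : Decidable (IsUnmatchedClose i w p) := by
  unfold IsUnmatchedClose; infer_instance

instance (i : ℕ) (w : List ℕ) (p : ℕ) : Decidable (IsUnmatchedOpen i w p) := by
  unfold IsUnmatchedOpen; infer_instance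

/-- The (increasing) list of positions of unmatched `i`'s (closing parentheses) of `w`. -/
def unmatchedCloses (i : ℕ) (w : List ℕ) : List ℕ :=
  (List.range w.length).filter fun p => decide (IsUnmatchedClose i w p)

/-- The (increasing) list of positions of unmatched `(i+1)`'s (opening parentheses) of `w`. -/
def unmatchedOpens (i : ℕ) (w : List ℕ) : List ℕ :=
  (List.range w.length).filter fun p => decide (IsUnmatchedOpen i w p)

/-- The crystal operator `F_i` on words: replace the rightmost unmatched `i` by `i+1`;
`none` (i.e. `0`) if every `i` is matched. -/
def Fop (i : ℕ) (w : List ℕ) : Option (List ℕ) :=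
  match (unmatchedCloses i w).getLast? with
  | none => none
  | some p => some (w.set p (i + 1))

/-- The crystal operator `E_i` on words: replace the leftmost unmatched `i+1` by `i`;
`none` (i.e. `0`) if every `i+1` is matched. -/
def Eop (i : ℕ) (w : List ℕ) : Option (List ℕ) :=
  match (unmatchedOpens i w).head? with
  | none => none
  | some p => some (w.set p i)

/-- `s` is a string over the alphabet `{1, …, m}`. -/
def IsWordOver (m : ℕ) (s : List ℕ) : Prop := ∀ x ∈ s, 1 ≤ x ∧ x ≤ m

/-- Two words are joined by an edge colored `i` (for some `i ∈ [m-1]`) of the crystal graph on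
words: one is the image of the other under `F_i`. -/
def wordEdge (m : ℕ) (u v : List ℕ) : Prop :=
  ∃ i, 1 ≤ i ∧ i < m ∧ (Fop i u = some v ∨ Fop i v = some u)

/-- `v` lies in the connected component of `u` in the crystal graph on words. -/
def wordComp (m : ℕ) (u v : List ℕ) : Prop :=
  Relation.ReflTransGen (wordEdge m) u v

/-!
Write `v ⟶ v'` when `v' = E_i v` for some `i ∈ [m-1]`. Since `E_i` lowers a letter, `⟶` strictly
decreases the letter sum and so terminates. It is also locally confluent: `E_i` and `E_j` commute
when `|i - j| ≥ 2`, and for `j = i + 1` they either commute or satisfy the hexagon relation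
`E_i E_{i+1} E_{i+1} E_i = E_{i+1} E_i E_i E_{i+1}`. By Newman's lemma every word then raises to
a unique word killed by all `E_i`. As `F_i` and `E_i` are mutually inverse, the edges of the graph
are the steps of `⟶` in either direction, so each component contains exactly one such word.

The position acted on is read off the height function `k ↦ prefD i w k`: `E_i` acts at the last
maximum of the height, `F_i` just before its first maximum. All the commutation relations then
reduce to comparisons of heights.
-/

namespace Relation

variable {α : Type*} {r : α → α → Prop}

theorem church_rosser_of_wellFounded (hwf : WellFounded (flip r))
    (hlc : ∀ a b c, r a b → r a c → Join (ReflTransGen r) b c) {a b c : α}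
    (hab : ReflTransGen r a b) (hac : ReflTransGen r a c) : Join (ReflTransGen r) b c := by
  induction a using hwf.induction generalizing b c with
  | _ a ih =>
  rcases hab.cases_head with rfl | ⟨b₁, hab₁, hb₁b⟩
  · exact ⟨c, hac, .refl⟩
  rcases hac.cases_head with rfl | ⟨c₁, hac₁, hc₁c⟩
  · exact ⟨b, .refl, hab⟩
  obtain ⟨d, hb₁d, hc₁d⟩ := hlc a b₁ c₁ hab₁ hac₁
  obtain ⟨e, hbe, hde⟩ := ih b₁ hab₁ hb₁b hb₁d
  obtain ⟨f, hcf, hef⟩ := ih c₁ hac₁ hc₁c (hc₁d.trans hde)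
  exact ⟨f, hbe.trans hef, hcf⟩

theorem ReflTransGen.eq_of_normal {a b : α} (h : ReflTransGen r a b) (ha : ∀ c, ¬ r a c) :
    a = b := by
  rcases h.cases_head with rfl | ⟨c, hac, -⟩
  · rfl
  · exact absurd hac (ha c)

theorem existsUnique_normal_reflTransGen_symmGen (hwf : WellFounded (flip r))
    (hlc : ∀ a b c, r a b → r a c → Join (ReflTransGen r) b c) (a : α) :
    ∃! v, ReflTransGen (SymmGen r) a v ∧ ∀ b, ¬ r v b := by
  have hequiv : Equivalence (Join (ReflTransGen r)) :=
    equivalence_join fun _ _ _ => church_rosser_of_wellFounded hwf hlc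
  have hjoin : ∀ {b}, ReflTransGen (SymmGen r) a b → Join (ReflTransGen r) a b := by
    intro b h
    induction h with
    | refl => exact hequiv.refl a
    | tail _ hbc ih =>
      refine hequiv.trans ih ?_
      rcases hbc with hbc | hcb
      exacts [⟨_, .single hbc, .refl⟩, ⟨_, .refl, .single hcb⟩]
  obtain ⟨v, hav, hmin⟩ := hwf.has_min {x | ReflTransGen r a x} ⟨a, .refl⟩
  have hv : ∀ b, ¬ r v b := fun b hvb => hmin b (hav.tail hvb) hvb
  have hav_symm : ReflTransGen (SymmGen r) a v :=
    ReflTransGen.mono (fun _ _ => SymmGen.of_rel) _ _ hav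
  refine ⟨v, ⟨hav_symm, hv⟩, ?_⟩
  rintro v' ⟨hav', hv'⟩
  obtain ⟨c, hv'c, hvc⟩ := hequiv.trans (hequiv.symm (hjoin hav')) (hjoin hav_symm)
  exact (hv'c.eq_of_normal hv').trans (hvc.eq_of_normal hv).symm

end Relation

section Argmax

def IsLastArgmax (f : ℕ → ℤ) (N p : ℕ) : Prop :=
  p ≤ N ∧ ∀ q ≤ N, f q ≤ f p ∧ (p < q → f q < f p)

def IsFirstArgmax (f : ℕ → ℤ) (N p : ℕ) : Prop :=
  p ≤ N ∧ ∀ q ≤ N, f q ≤ f p ∧ (q < p → f q < f p)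

theorem exists_last_ge (f : ℕ → ℤ) {t : ℤ} {a b : ℕ} (hab : a ≤ b) (ha : t ≤ f a) :
    ∃ c, a ≤ c ∧ c ≤ b ∧ t ≤ f c ∧ ∀ k, c < k → k ≤ b → f k < t :=
  ⟨Nat.findGreatest (fun k => t ≤ f k) b, Nat.le_findGreatest hab ha, Nat.findGreatest_le b,
    Nat.findGreatest_spec (P := fun k => t ≤ f k) hab ha,
    fun _ h₁ h₂ => lt_of_not_ge (Nat.findGreatest_is_greatest h₁ h₂)⟩

theorem exists_max_image_le (f : ℕ → ℤ) (N : ℕ) :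
    ∃ p ≤ N, ∀ q ≤ N, f q ≤ f p := by
  obtain ⟨p, hp, hmax⟩ := (Finset.range (N + 1)).exists_max_image f ⟨0, by simp⟩
  exact ⟨p, by simpa [Nat.lt_succ_iff] using hp,
    fun q hq => hmax q (by simpa [Nat.lt_succ_iff] using hq)⟩

theorem exists_isLastArgmax (f : ℕ → ℤ) (N : ℕ) : ∃ p, IsLastArgmax f N p := by
  obtain ⟨p₀, hp₀, hmax⟩ := exists_max_image_le f N
  obtain ⟨p, -, hpN, hp, hlast⟩ := exists_last_ge f hp₀ (le_refl (f p₀))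
  exact ⟨p, hpN, fun q hq =>
    ⟨(hmax q hq).trans hp, fun hpq => (hlast q hpq hq).trans_le hp⟩⟩

theorem exists_isFirstArgmax (f : ℕ → ℤ) (N : ℕ) : ∃ p, IsFirstArgmax f N p := by
  have h := exists_max_image_le f N
  obtain ⟨hpN, hmax⟩ := Nat.find_spec h
  refine ⟨Nat.find h, hpN, fun q hq => ⟨hmax q hq, fun hlt => ?_⟩⟩
  by_contra hle
  exact Nat.find_min h hlt ⟨hq, fun r hr => (hmax r hr).trans (not_lt.mp hle)⟩

end Argmax

section Height

theorem prefD_zero (i : ℕ) (w : List ℕ) : prefD i w 0 = 0 := by simp [prefD]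

theorem prefD_succ (i : ℕ) (w : List ℕ) (k : ℕ) :
    prefD i w (k + 1) = prefD i w k + (if w[k]? = some i then 1 else 0)
      - (if w[k]? = some (i + 1) then 1 else 0) := by
  unfold prefD
  rw [List.take_add_one]
  rcases w[k]? with _ | a
  · simp
  · by_cases h₁ : a = i <;> by_cases h₂ : a = i + 1 <;> simp [h₁, h₂] <;> omega

theorem getElem?_eq_of_prefD_succ_lt {i : ℕ} {w : List ℕ} {k : ℕ}
    (h : prefD i w (k + 1) < prefD i w k) : w[k]? = some (i + 1) := by
  have := prefD_succ i w k
  split_ifs at this <;> first | assumption | omega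

theorem getElem?_eq_of_prefD_lt_succ {i : ℕ} {w : List ℕ} {k : ℕ}
    (h : prefD i w k < prefD i w (k + 1)) : w[k]? = some i := by
  have := prefD_succ i w k
  split_ifs at this <;> first | assumption | omega

theorem prefD_succ_of_getElem? {i a : ℕ} {w : List ℕ} {k : ℕ} (h : w[k]? = some a) :
    prefD i w (k + 1) = prefD i w k + (if a = i then 1 else 0) - (if a = i + 1 then 1 else 0) := by
  simp only [prefD_succ, h, Option.some.injEq]

theorem prefD_set_of_getElem? {w : List ℕ} {p a : ℕ} (h : w[p]? = some a) (i b k : ℕ) :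
    prefD i (w.set p b) k = prefD i w k +
      if p < k then ((if b = i then 1 else 0) - (if b = i + 1 then 1 else 0)
        + (if a = i + 1 then 1 else 0) - (if a = i then 1 else 0) : ℤ) else 0 := by
  have hp : p < w.length := (List.getElem?_eq_some_iff.mp h).1
  induction k with
  | zero => simp [prefD_zero]
  | succ k ih =>
    rcases eq_or_ne p k with rfl | hpk
    · rw [prefD_succ_of_getElem? (by simp [hp] : (w.set p b)[p]? = some b),
        prefD_succ_of_getElem? h, ih]
      split_ifs <;> omega
    · have hk : (w.set p b)[k]? = w[k]? := List.getElem?_set_ne hpk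
      rw [prefD_succ, prefD_succ, hk, ih]
      split_ifs <;> omega

variable {w : List ℕ} {i p : ℕ}

theorem prefD_set_lower (h : w[p]? = some (i + 1)) (k : ℕ) :
    prefD i (w.set p i) k = prefD i w k + if p < k then 2 else 0 := by
  rw [prefD_set_of_getElem? h]; split_ifs <;> omega

theorem prefD_succ_set_lower (h : w[p]? = some (i + 1)) (k : ℕ) :
    prefD (i + 1) (w.set p i) k = prefD (i + 1) w k - if p < k then 1 else 0 := by
  rw [prefD_set_of_getElem? h]; split_ifs <;> omega

theorem prefD_set_lower_succ (h : w[p]? = some (i + 1 + 1)) (k : ℕ) :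
    prefD i (w.set p (i + 1)) k = prefD i w k - if p < k then 1 else 0 := by
  rw [prefD_set_of_getElem? h]; split_ifs <;> omega

theorem prefD_set_raise (h : w[p]? = some i) (k : ℕ) :
    prefD i (w.set p (i + 1)) k = prefD i w k - if p < k then 2 else 0 := by
  rw [prefD_set_of_getElem? h]; split_ifs <;> omega

theorem prefD_set_of_ne {a b : ℕ} (h : w[p]? = some a) (ha : a ≠ i ∧ a ≠ i + 1)
    (hb : b ≠ i ∧ b ≠ i + 1) (k : ℕ) : prefD i (w.set p b) k = prefD i w k := by
  rw [prefD_set_of_getElem? h]; split_ifs <;> omega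

theorem suffD_eq_prefD_add (i : ℕ) (w : List ℕ) (k : ℕ) :
    suffD i w k = ((w.count (i + 1) : ℤ) - w.count i) + prefD i w k := by
  have hsplit (c : ℕ) : w.count c = (w.take k).count c + (w.drop k).count c := by
    rw [← List.count_append, List.take_append_drop]
  unfold suffD prefD
  rw [hsplit i, hsplit (i + 1)]
  push_cast
  ring

end Height

section FilterRange

variable {P : ℕ → Prop} [DecidablePred P] {N p : ℕ}

theorem head?_filter_range_eq_some (hp : p < N) (hP : P p) (hmin : ∀ q < p, ¬ P q) :
    ((List.range N).filter (fun x => decide (P x))).head? = some p := by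
  rw [List.head?_filter, List.find?_eq_some_iff_getElem]
  exact ⟨by simpa using hP, p, by simpa using hp, by simp,
    fun j hj => by simpa using hmin j (by simpa using hj)⟩

theorem getLast?_filter_range_eq_some (hp : p < N) (hP : P p)
    (hmax : ∀ q, p < q → q < N → ¬ P q) :
    ((List.range N).filter (fun x => decide (P x))).getLast? = some p := by
  obtain ⟨k, rfl⟩ : ∃ k, N = p + 1 + k := ⟨N - (p + 1), by omega⟩
  have hnil : (List.map (fun x => p + 1 + x) (List.range k)).filter (fun x => decide (P x)) = [] :=
    List.filter_eq_nil_iff.2 fun q hq => by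
      obtain ⟨r, hr, rfl⟩ := List.mem_map.1 hq
      simpa using hmax _ (by omega) (by simp at hr; omega)
  rw [List.range_add, List.filter_append, hnil, List.append_nil, List.range_succ,
    List.filter_append]
  simp [hP]

end FilterRange

theorem List.set_eq_self_of_getElem?_eq {α : Type*} {w : List α} {p : ℕ} {a : α}
    (h : w[p]? = some a) : w.set p a = w := by
  obtain ⟨hp, rfl⟩ := List.getElem?_eq_some_iff.1 h
  exact List.set_getElem_self hp

section Operators

variable {i : ℕ} {w : List ℕ}

theorem isUnmatchedOpen_iff {p : ℕ} : IsUnmatchedOpen i w p ↔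
    w[p]? = some (i + 1) ∧ ∀ q ≤ w.length, p < q → prefD i w q < prefD i w p := by
  simp only [IsUnmatchedOpen, suffD_eq_prefD_add, add_lt_add_iff_left]

theorem Eop_eq_some_of_isLastArgmax {p : ℕ} (hp : p < w.length)
    (h : IsLastArgmax (prefD i w) w.length p) :
    w[p]? = some (i + 1) ∧ Eop i w = some (w.set p i) := by
  have hlet := getElem?_eq_of_prefD_succ_lt ((h.2 (p + 1) hp).2 (lt_add_one p))
  have hopen : IsUnmatchedOpen i w p :=
    isUnmatchedOpen_iff.2 ⟨hlet, fun q hq hpq => (h.2 q hq).2 hpq⟩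
  have hmin : ∀ q < p, ¬ IsUnmatchedOpen i w q := fun q hqp hq =>
    ((isUnmatchedOpen_iff.1 hq).2 p hp.le hqp).not_ge (h.2 q (by omega)).1
  refine ⟨hlet, ?_⟩
  rw [Eop, unmatchedOpens, head?_filter_range_eq_some hp hopen hmin]

theorem Eop_eq_none_of_isLastArgmax (h : IsLastArgmax (prefD i w) w.length w.length) :
    Eop i w = none := by
  have hnil : unmatchedOpens i w = [] := List.filter_eq_nil_iff.2 fun q hq hopen => by
    have hqN : q < w.length := List.mem_range.1 hq
    exact ((isUnmatchedOpen_iff.1 (of_decide_eq_true hopen)).2 _ le_rfl hqN).not_ge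
      (h.2 q hqN.le).1
  rw [Eop, hnil, List.head?_nil]

theorem exists_of_Eop_eq_some {u : List ℕ} (h : Eop i w = some u) :
    ∃ p < w.length, IsLastArgmax (prefD i w) w.length p ∧ u = w.set p i := by
  obtain ⟨p, hp⟩ := exists_isLastArgmax (prefD i w) w.length
  rcases hp.1.lt_or_eq with hpN | rfl
  · exact ⟨p, hpN, hp, Option.some.inj ((Eop_eq_some_of_isLastArgmax hpN hp).2 ▸ h).symm⟩
  · exact absurd (Eop_eq_none_of_isLastArgmax hp ▸ h) (by simp)

theorem Fop_eq_some_of_isFirstArgmax {p : ℕ} (h : IsFirstArgmax (prefD i w) w.length (p + 1)) :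
    w[p]? = some i ∧ Fop i w = some (w.set p (i + 1)) := by
  have hp : p < w.length := h.1
  have hlet := getElem?_eq_of_prefD_lt_succ ((h.2 p hp.le).2 (lt_add_one p))
  have hclose : IsUnmatchedClose i w p := ⟨hlet, fun q hq => (h.2 q (by omega)).2 (by omega)⟩
  have hmax : ∀ q, p < q → q < w.length → ¬ IsUnmatchedClose i w q := fun q hpq hqN hq =>
    (hq.2 (p + 1) hpq).not_ge (h.2 (q + 1) hqN).1
  refine ⟨hlet, ?_⟩
  rw [Fop, unmatchedCloses, getLast?_filter_range_eq_some hp hclose hmax]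

theorem Fop_eq_none_of_isFirstArgmax (h : IsFirstArgmax (prefD i w) w.length 0) :
    Fop i w = none := by
  have hnil : unmatchedCloses i w = [] := List.filter_eq_nil_iff.2 fun q hq hclose => by
    have hqN : q < w.length := List.mem_range.1 hq
    exact ((of_decide_eq_true hclose).2 0 (Nat.zero_le q)).not_ge (h.2 (q + 1) hqN).1
  rw [Fop, hnil, List.getLast?_nil]

theorem exists_of_Fop_eq_some {v : List ℕ} (h : Fop i w = some v) :
    ∃ p, IsFirstArgmax (prefD i w) w.length (p + 1) ∧ v = w.set p (i + 1) := by
  obtain ⟨_ | p, hp⟩ := exists_isFirstArgmax (prefD i w) w.length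
  · exact absurd (Fop_eq_none_of_isFirstArgmax hp ▸ h) (by simp)
  · exact ⟨p, hp, Option.some.inj ((Fop_eq_some_of_isFirstArgmax hp).2 ▸ h).symm⟩

theorem Fop_eq_some_of_Eop_eq_some {u : List ℕ} (h : Eop i w = some u) : Fop i u = some w := by
  obtain ⟨p, hpN, hp, rfl⟩ := exists_of_Eop_eq_some h
  have hlet := (Eop_eq_some_of_isLastArgmax hpN hp).1
  have hstep := prefD_succ_of_getElem? (i := i) hlet
  have hfirst : IsFirstArgmax (prefD i (w.set p i)) (w.set p i).length (p + 1) := by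
    refine ⟨by simpa using hpN, fun q hq => ?_⟩
    rw [List.length_set] at hq
    have := hp.2 q hq
    have := hp.2 (p + 1) hpN
    simp only [prefD_set_lower hlet]
    split_ifs <;> omega
  rw [(Fop_eq_some_of_isFirstArgmax hfirst).2, List.set_set,
    List.set_eq_self_of_getElem?_eq hlet]

theorem Eop_eq_some_of_Fop_eq_some {v : List ℕ} (h : Fop i w = some v) : Eop i v = some w := by
  obtain ⟨p, hp, rfl⟩ := exists_of_Fop_eq_some h
  have hpN : p < w.length := hp.1
  have hlet := (Fop_eq_some_of_isFirstArgmax hp).1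
  have hstep := prefD_succ_of_getElem? (i := i) hlet
  have hlast : IsLastArgmax (prefD i (w.set p (i + 1))) (w.set p (i + 1)).length p := by
    refine ⟨by simp; omega, fun q hq => ?_⟩
    rw [List.length_set] at hq
    have := hp.2 q hq
    have := hp.2 p hpN.le
    simp only [prefD_set_raise hlet]
    split_ifs <;> omega
  rw [(Eop_eq_some_of_isLastArgmax (by simpa using hpN) hlast).2, List.set_set,
    List.set_eq_self_of_getElem?_eq hlet]

theorem Fop_eq_some_iff_Eop_eq_some {u v : List ℕ} : Fop i u = some v ↔ Eop i v = some u :=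
  ⟨Eop_eq_some_of_Fop_eq_some, Fop_eq_some_of_Eop_eq_some⟩

end Operators

section LocalConfluence

variable {i : ℕ} {w : List ℕ}

theorem Eop_eq_some_of_forall_le {j p : ℕ} {x : List ℕ} (hp : p < x.length)
    (h : ∀ q ≤ x.length,
      prefD j x q ≤ prefD j x p ∧ (p < q → prefD j x q < prefD j x p)) :
    x[p]? = some (j + 1) ∧ Eop j x = some (x.set p j) :=
  Eop_eq_some_of_isLastArgmax hp ⟨hp.le, h⟩

theorem Eop_comm_of_add_one_lt {j : ℕ} {u v : List ℕ} (hij : i + 1 < j)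
    (hu : Eop i w = some u) (hv : Eop j w = some v) :
    ∃ z, Eop j u = some z ∧ Eop i v = some z := by
  obtain ⟨A, hAN, hA, rfl⟩ := exists_of_Eop_eq_some hu
  obtain ⟨B, hBN, hB, rfl⟩ := exists_of_Eop_eq_some hv
  have hAlet := (Eop_eq_some_of_isLastArgmax hAN hA).1
  have hBlet := (Eop_eq_some_of_isLastArgmax hBN hB).1
  have hAB : A ≠ B := by
    rintro rfl
    rw [hAlet, Option.some.injEq] at hBlet
    omega
  have hu' : prefD j (w.set A i) = prefD j w :=
    funext (prefD_set_of_ne hAlet (by omega) (by omega))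
  have hv' : prefD i (w.set B j) = prefD i w :=
    funext (prefD_set_of_ne hBlet (by omega) (by omega))
  refine ⟨(w.set A i).set B j,
    (Eop_eq_some_of_isLastArgmax (by simpa) (by rwa [hu', List.length_set])).2, ?_⟩
  rw [(Eop_eq_some_of_isLastArgmax (p := A) (by simpa) (by rwa [hv', List.length_set])).2,
    List.set_comm _ _ hAB]

theorem Eop_set_succ_of_lt {A B : ℕ} (hAB : A < B) (hBN : B < w.length)
    (hA : IsLastArgmax (prefD i w) w.length A) (hB : IsLastArgmax (prefD (i + 1) w) w.length B) :
    (w.set B (i + 1))[A]? = some (i + 1) ∧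
      Eop i (w.set B (i + 1)) = some ((w.set B (i + 1)).set A i) := by
  have hBlet := (Eop_eq_some_of_isLastArgmax hBN hB).1
  refine Eop_eq_some_of_forall_le (by simp; omega) fun q hq => ?_
  have := hA.2 q (by simpa using hq)
  simp only [prefD_set_lower_succ hBlet]
  split_ifs <;> omega

theorem Eop_set_succ_of_gt {A B : ℕ} (hBA : B < A) (hAN : A < w.length)
    (hA : IsLastArgmax (prefD i w) w.length A) (hB : IsLastArgmax (prefD (i + 1) w) w.length B)
    (hf : ∀ k ≤ B, prefD i w k < prefD i w A) :
    Eop i (w.set B (i + 1)) = some ((w.set B (i + 1)).set A i) := by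
  have hBlet := (Eop_eq_some_of_isLastArgmax (by omega) hB).1
  refine (Eop_eq_some_of_forall_le (by simpa) fun q hq => ?_).2
  have := hA.2 q (by simpa using hq)
  have := hf q
  simp only [prefD_set_lower_succ hBlet]
  split_ifs <;> omega

theorem Eop_succ_set_of_gt {A B : ℕ} (hBA : B < A) (hAN : A < w.length)
    (hA : IsLastArgmax (prefD i w) w.length A) (hB : IsLastArgmax (prefD (i + 1) w) w.length B) :
    (w.set A i)[B]? = some (i + 1 + 1) ∧
      Eop (i + 1) (w.set A i) = some ((w.set A i).set B (i + 1)) := by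
  have hAlet := (Eop_eq_some_of_isLastArgmax hAN hA).1
  refine Eop_eq_some_of_forall_le (by simp; omega) fun q hq => ?_
  have := hB.2 q (by simpa using hq)
  simp only [prefD_succ_set_lower hAlet]
  split_ifs <;> omega

theorem Eop_succ_set_of_lt {A B : ℕ} (hAB : A < B) (hBN : B < w.length)
    (hA : IsLastArgmax (prefD i w) w.length A) (hB : IsLastArgmax (prefD (i + 1) w) w.length B)
    (hg : ∀ k ≤ A, prefD (i + 1) w k < prefD (i + 1) w B) :
    Eop (i + 1) (w.set A i) = some ((w.set A i).set B (i + 1)) := by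
  have hAlet := (Eop_eq_some_of_isLastArgmax (by omega) hA).1
  refine (Eop_eq_some_of_forall_le (by simpa) fun q hq => ?_).2
  have := hB.2 q (by simpa using hq)
  have := hg q
  simp only [prefD_succ_set_lower hAlet]
  split_ifs <;> omega

theorem Eop_hexagon_of_lt {A B A₂ : ℕ} (hAB : A < B) (hBN : B < w.length)
    (hA : IsLastArgmax (prefD i w) w.length A)
    (hB : IsLastArgmax (prefD (i + 1) w) w.length B)
    (hA₂A : A₂ ≤ A) (hA₂ : prefD (i + 1) w A₂ = prefD (i + 1) w B)
    (hA₂last : ∀ k, A₂ < k → k ≤ A → prefD (i + 1) w k < prefD (i + 1) w B) :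
    Relation.Join (Relation.ReflTransGen fun x y => Eop i x = some y ∨ Eop (i + 1) x = some y)
      (w.set A i) (w.set B (i + 1)) := by
  have hAlet := (Eop_eq_some_of_isLastArgmax (by omega) hA).1
  have hBlet := (Eop_eq_some_of_isLastArgmax hBN hB).1
  obtain ⟨C, hAC, hCB, hCge, hClast⟩ := exists_last_ge (prefD i w) (t := prefD i w A - 1)
    (show A + 1 ≤ B by omega) (by rw [prefD_succ_of_getElem? hAlet]; simp)
  have hC : prefD i w C = prefD i w A - 1 := by have := hA.2 C (by omega); omega
  have heights (q : ℕ) (hq : q ≤ w.length) :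
      (prefD i w q ≤ prefD i w A ∧ (A < q → prefD i w q < prefD i w A)) ∧
      (prefD (i + 1) w q ≤ prefD (i + 1) w B ∧
        (B < q → prefD (i + 1) w q < prefD (i + 1) w B)) ∧
      (A₂ < q → q ≤ A → prefD (i + 1) w q < prefD (i + 1) w B) ∧
      (C < q → q ≤ B → prefD i w q < prefD i w A - 1) :=
    ⟨hA.2 q hq, hB.2 q hq, hA₂last q, hClast q⟩
  obtain ⟨hx₁, e₁⟩ := Eop_eq_some_of_forall_le (j := i + 1) (x := w.set A i) (p := A₂)
      (by simp; omega) fun q hq => by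
    have := heights q (by simpa using hq)
    simp only [prefD_succ_set_lower hAlet]
    split_ifs <;> omega
  obtain ⟨hx₂, e₂⟩ := Eop_eq_some_of_forall_le (j := i + 1)
      (x := (w.set A i).set A₂ (i + 1)) (p := B) (by simp; omega) fun q hq => by
    have := heights q (by simpa using hq)
    simp only [prefD_set_lower hx₁, prefD_succ_set_lower hAlet]
    split_ifs <;> omega
  obtain ⟨-, e₃⟩ := Eop_eq_some_of_forall_le (j := i)
      (x := ((w.set A i).set A₂ (i + 1)).set B (i + 1)) (p := C) (by simp; omega) fun q hq => by
    have := heights q (by simpa using hq)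
    simp only [prefD_set_lower_succ hx₂, prefD_set_lower_succ hx₁, prefD_set_lower hAlet]
    split_ifs <;> omega
  obtain ⟨hy₁, f₁⟩ := Eop_set_succ_of_lt hAB hBN hA hB
  obtain ⟨hy₂, f₂⟩ := Eop_eq_some_of_forall_le (j := i)
      (x := (w.set B (i + 1)).set A i) (p := C) (by simp; omega) fun q hq => by
    have := heights q (by simpa using hq)
    simp only [prefD_set_lower hy₁, prefD_set_lower_succ hBlet]
    split_ifs <;> omega
  obtain ⟨-, f₃⟩ := Eop_eq_some_of_forall_le (j := i + 1)
      (x := ((w.set B (i + 1)).set A i).set C i) (p := A₂) (by simp; omega) fun q hq => by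
    have := heights q (by simpa using hq)
    simp only [prefD_succ_set_lower hy₂, prefD_succ_set_lower hy₁, prefD_set_lower hBlet]
    split_ifs <;> omega
  have hz : (((w.set A i).set A₂ (i + 1)).set B (i + 1)).set C i
      = (((w.set B (i + 1)).set A i).set C i).set A₂ (i + 1) := by
    refine List.ext_getElem? fun k => ?_
    simp only [List.getElem?_set, List.length_set]
    split_ifs <;> first | rfl | omega
  exact ⟨_, .head (Or.inr e₁) (.head (Or.inr e₂) (.single (Or.inl e₃))),
    hz ▸ .head (Or.inl f₁) (.head (Or.inl f₂) (.single (Or.inr f₃)))⟩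

theorem Eop_hexagon_of_gt {A B B₂ : ℕ} (hBA : B < A) (hAN : A < w.length)
    (hA : IsLastArgmax (prefD i w) w.length A)
    (hB : IsLastArgmax (prefD (i + 1) w) w.length B)
    (hB₂B : B₂ ≤ B) (hB₂ : prefD i w B₂ = prefD i w A)
    (hB₂last : ∀ k, B₂ < k → k ≤ B → prefD i w k < prefD i w A) :
    Relation.Join (Relation.ReflTransGen fun x y => Eop i x = some y ∨ Eop (i + 1) x = some y)
      (w.set A i) (w.set B (i + 1)) := by
  have hAlet := (Eop_eq_some_of_isLastArgmax hAN hA).1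
  have hBlet := (Eop_eq_some_of_isLastArgmax (by omega) hB).1
  obtain ⟨C₂, hBC₂, hC₂A, hC₂ge, hC₂last⟩ := exists_last_ge (prefD (i + 1) w)
    (t := prefD (i + 1) w B - 1) (show B + 1 ≤ A by omega)
    (by rw [prefD_succ_of_getElem? hBlet]; simp)
  have hC₂ : prefD (i + 1) w C₂ = prefD (i + 1) w B - 1 := by
    have := hB.2 C₂ (by omega); omega
  have heights (q : ℕ) (hq : q ≤ w.length) :
      (prefD i w q ≤ prefD i w A ∧ (A < q → prefD i w q < prefD i w A)) ∧
      (prefD (i + 1) w q ≤ prefD (i + 1) w B ∧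
        (B < q → prefD (i + 1) w q < prefD (i + 1) w B)) ∧
      (B₂ < q → q ≤ B → prefD i w q < prefD i w A) ∧
      (C₂ < q → q ≤ A → prefD (i + 1) w q < prefD (i + 1) w B - 1) :=
    ⟨hA.2 q hq, hB.2 q hq, hB₂last q, hC₂last q⟩
  obtain ⟨hx₁, e₁⟩ := Eop_succ_set_of_gt hBA hAN hA hB
  obtain ⟨hx₂, e₂⟩ := Eop_eq_some_of_forall_le (j := i + 1)
      (x := (w.set A i).set B (i + 1)) (p := C₂) (by simp; omega) fun q hq => by
    have := heights q (by simpa using hq)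
    simp only [prefD_set_lower hx₁, prefD_succ_set_lower hAlet]
    split_ifs <;> omega
  obtain ⟨-, e₃⟩ := Eop_eq_some_of_forall_le (j := i)
      (x := ((w.set A i).set B (i + 1)).set C₂ (i + 1)) (p := B₂) (by simp; omega)
      fun q hq => by
    have := heights q (by simpa using hq)
    simp only [prefD_set_lower_succ hx₂, prefD_set_lower_succ hx₁, prefD_set_lower hAlet]
    split_ifs <;> omega
  obtain ⟨hy₁, f₁⟩ := Eop_eq_some_of_forall_le (j := i) (x := w.set B (i + 1)) (p := B₂)
      (by simp; omega) fun q hq => by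
    have := heights q (by simpa using hq)
    simp only [prefD_set_lower_succ hBlet]
    split_ifs <;> omega
  obtain ⟨hy₂, f₂⟩ := Eop_eq_some_of_forall_le (j := i)
      (x := (w.set B (i + 1)).set B₂ i) (p := A) (by simp; omega) fun q hq => by
    have := heights q (by simpa using hq)
    simp only [prefD_set_lower hy₁, prefD_set_lower_succ hBlet]
    split_ifs <;> omega
  obtain ⟨-, f₃⟩ := Eop_eq_some_of_forall_le (j := i + 1)
      (x := ((w.set B (i + 1)).set B₂ i).set A i) (p := C₂) (by simp; omega) fun q hq => by
    have := heights q (by simpa using hq)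
    simp only [prefD_succ_set_lower hy₂, prefD_succ_set_lower hy₁, prefD_set_lower hBlet]
    split_ifs <;> omega
  have hz : (((w.set A i).set B (i + 1)).set C₂ (i + 1)).set B₂ i
      = (((w.set B (i + 1)).set B₂ i).set A i).set C₂ (i + 1) := by
    refine List.ext_getElem? fun k => ?_
    simp only [List.getElem?_set, List.length_set]
    split_ifs <;> first | rfl | omega
  exact ⟨_, .head (Or.inr e₁) (.head (Or.inr e₂) (.single (Or.inl e₃))),
    hz ▸ .head (Or.inl f₁) (.head (Or.inl f₂) (.single (Or.inr f₃)))⟩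

theorem join_of_Eop_of_Eop_succ {u v : List ℕ} (hu : Eop i w = some u)
    (hv : Eop (i + 1) w = some v) :
    Relation.Join (Relation.ReflTransGen fun x y => Eop i x = some y ∨ Eop (i + 1) x = some y)
      u v := by
  obtain ⟨A, hAN, hA, rfl⟩ := exists_of_Eop_eq_some hu
  obtain ⟨B, hBN, hB, rfl⟩ := exists_of_Eop_eq_some hv
  have hAB : A ≠ B := by
    rintro rfl
    have := (Eop_eq_some_of_isLastArgmax hAN hA).1.symm.trans
      (Eop_eq_some_of_isLastArgmax hBN hB).1
    simp at this
  -- For `A < B`, lowering at `A` lowers the `(i+1)`-height after `A` by one, so `E_{i+1}`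
  -- still acts at `B` unless that height already reaches its maximum at or before `A`;
  -- dually for `B < A`.
  rcases hAB.lt_or_gt with hAB | hBA
  · by_cases hg : ∀ k ≤ A, prefD (i + 1) w k < prefD (i + 1) w B
    · exact ⟨_, .single (Or.inr (Eop_succ_set_of_lt hAB hBN hA hB hg)),
        List.set_comm _ _ hAB.ne ▸ .single (Or.inl (Eop_set_succ_of_lt hAB hBN hA hB).2)⟩
    · simp only [not_forall, not_lt] at hg
      obtain ⟨k, hkA, hk⟩ := hg
      obtain ⟨A₂, -, hA₂A, hA₂, hA₂last⟩ := exists_last_ge _ hkA hk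
      exact Eop_hexagon_of_lt hAB hBN hA hB hA₂A
        (le_antisymm (hB.2 A₂ (by omega)).1 hA₂) hA₂last
  · by_cases hf : ∀ k ≤ B, prefD i w k < prefD i w A
    · exact ⟨_, .single (Or.inr (Eop_succ_set_of_gt hBA hAN hA hB).2),
        List.set_comm _ _ hBA.ne ▸ .single (Or.inl (Eop_set_succ_of_gt hBA hAN hA hB hf))⟩
    · simp only [not_forall, not_lt] at hf
      obtain ⟨k, hkB, hk⟩ := hf
      obtain ⟨B₂, -, hB₂B, hB₂, hB₂last⟩ := exists_last_ge _ hkB hk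
      exact Eop_hexagon_of_gt hBA hAN hA hB hB₂B
        (le_antisymm (hA.2 B₂ (by omega)).1 hB₂) hB₂last

end LocalConfluence

def RaisingStep (m : ℕ) (u v : List ℕ) : Prop := ∃ i, 1 ≤ i ∧ i < m ∧ Eop i u = some v

theorem sum_lt_of_Eop_eq_some {i : ℕ} {w u : List ℕ} (h : Eop i w = some u) :
    u.sum < w.sum := by
  obtain ⟨p, hpN, hp, rfl⟩ := exists_of_Eop_eq_some h
  have hlet := (Eop_eq_some_of_isLastArgmax hpN hp).1
  have hu := List.sum_set w p i
  have hw := List.sum_set w p (i + 1)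
  rw [List.set_eq_self_of_getElem?_eq hlet] at hw
  rw [if_pos hpN] at hu hw
  omega

theorem wellFounded_flip_raisingStep (m : ℕ) : WellFounded (flip (RaisingStep m)) :=
  Subrelation.wf (fun {_ _} ⟨_, _, _, h⟩ => sum_lt_of_Eop_eq_some h) (measure List.sum).wf

theorem join_of_Eop_of_Eop {i j : ℕ} {w u v : List ℕ} (hij : i ≤ j) (hu : Eop i w = some u)
    (hv : Eop j w = some v) :
    Relation.Join (Relation.ReflTransGen fun x y => Eop i x = some y ∨ Eop j x = some y) u v := by
  rcases (show j = i ∨ j = i + 1 ∨ i + 1 < j by omega) with rfl | rfl | hij'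
  · exact ⟨u, .refl, Option.some.inj (hv.symm.trans hu) ▸ .refl⟩
  · exact join_of_Eop_of_Eop_succ hu hv
  · obtain ⟨z, huz, hvz⟩ := Eop_comm_of_add_one_lt hij' hu hv
    exact ⟨z, .single (Or.inr huz), .single (Or.inl hvz)⟩

theorem join_of_raisingStep (m : ℕ) (a b c : List ℕ) (hb : RaisingStep m a b)
    (hc : RaisingStep m a c) : Relation.Join (Relation.ReflTransGen (RaisingStep m)) b c := by
  obtain ⟨i, hi₁, hi₂, hb⟩ := hb
  obtain ⟨j, hj₁, hj₂, hc⟩ := hc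
  have hmono : ∀ x y, (Eop i x = some y ∨ Eop j x = some y) → RaisingStep m x y := by
    rintro x y (h | h)
    exacts [⟨i, hi₁, hi₂, h⟩, ⟨j, hj₁, hj₂, h⟩]
  rcases le_total i j with hij | hji
  · obtain ⟨z, hbz, hcz⟩ := join_of_Eop_of_Eop hij hb hc
    exact ⟨z, .mono hmono _ _ hbz, .mono hmono _ _ hcz⟩
  · obtain ⟨z, hcz, hbz⟩ := join_of_Eop_of_Eop hji hc hb
    exact ⟨z, .mono (fun x y h => hmono x y h.symm) _ _ hbz,
      .mono (fun x y h => hmono x y h.symm) _ _ hcz⟩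

theorem wordEdge_eq_symmGen (m : ℕ) : wordEdge m = Relation.SymmGen (RaisingStep m) := by
  ext u v
  simp only [wordEdge, Relation.SymmGen, RaisingStep, Fop_eq_some_iff_Eop_eq_some]
  grind

theorem forall_not_raisingStep_iff {m : ℕ} {v : List ℕ} :
    (∀ b, ¬ RaisingStep m v b) ↔ ∀ i, 1 ≤ i → i < m → Eop i v = none := by
  simp only [RaisingStep, not_exists, not_and, Option.eq_none_iff_forall_ne_some]
  exact ⟨fun h i hi₁ hi₂ b => h b i hi₁ hi₂, fun h b i hi₁ hi₂ => h i hi₁ hi₂ b⟩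

theorem exists_unique_highest_general (m : ℕ) (s : List ℕ) :
    ∃! v : List ℕ, wordComp m s v ∧ ∀ i, 1 ≤ i → i < m → Eop i v = none := by
  simpa only [wordComp, wordEdge_eq_symmGen, forall_not_raisingStep_iff] using
    Relation.existsUnique_normal_reflTransGen_symmGen (wellFounded_flip_raisingStep m)
      (join_of_raisingStep m) s

/-- Fix `m, n ≥ 1` and consider the graph on `[m]^n` whose edges join `s`
and `F_i(s)` whenever `F_i(s) ≠ 0`, for `i ∈ [m-1]`. Each connected component of this graph
contains exactly one vertex `v` with `E_i(v) = 0` for every `i ∈ [m-1]`. -/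
theorem exists_unique_highest (m n : ℕ) (hm : 1 ≤ m) (hn : 1 ≤ n)
    (s : List ℕ) (hs : s.length = n) (hs' : IsWordOver m s) :
    ∃! v : List ℕ, wordComp m s v ∧ ∀ i, 1 ≤ i → i < m → Eop i v = none :=
  exists_unique_highest_general m s
end

section
/- Fix a skew shape λ/μ, m ≥ 1, and a sequence h of positive integers. For each word r over [m], there is at most one reverse plane partition T of shape λ/μ with entries in [m] such that r(T) = r and h(T) = h. -/
/-!
Work upwards from the bottom row. The height word says how many entries of each row are read,
so the reading word splits into the read entries of each row. An unread entry equals the entry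
below it, while a read entry with a cell below it is strictly smaller than that entry. Hence,
once the row below is known, two candidate rows with the same read entries agree: at the first
column read in only one of them, the read value is smaller than the other row's value there, yet
it reappears further right among the other row's read entries, contradicting monotonicity.
-/

/-- Matrix convention: `r` is the row index counted from the top, `c` the column index,
both 0-based. -/
def IsSkewCell (lam mu : YoungDiagram) (r c : ℕ) : Prop :=
  (r, c) ∈ lam.cells ∧ (r, c) ∉ mu.cells

instance (lam mu : YoungDiagram) (r c : ℕ) : Decidable (IsSkewCell lam mu r c) := by
  unfold IsSkewCell; infer_instance

/-- `T` is normalized to be `0` outside the shape. -/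
def IsSkewRPP (lam mu : YoungDiagram) (m : ℕ) (T : ℕ → ℕ → ℕ) : Prop :=
  (∀ r c, ¬ IsSkewCell lam mu r c → T r c = 0) ∧
  (∀ r c, IsSkewCell lam mu r c → 1 ≤ T r c ∧ T r c ≤ m) ∧
  (∀ r c, IsSkewCell lam mu r c → IsSkewCell lam mu r (c + 1) → T r c ≤ T r (c + 1)) ∧
  (∀ r c, IsSkewCell lam mu r c → IsSkewCell lam mu (r + 1) c → T r c ≤ T (r + 1) c)

def readingWord (lam mu : YoungDiagram) (T : ℕ → ℕ → ℕ) : List ℕ :=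
  ((List.range (lam.colLen 0)).reverse).flatMap fun r =>
    ((List.range (lam.rowLen r)).filter fun c =>
      decide (IsSkewCell lam mu r c) &&
        ! (decide (IsSkewCell lam mu (r + 1) c) && decide (T (r + 1) c = T r c))).map (T r)

/-- Heights are 1-based row indices, as in the paper. -/
def heightWord (lam mu : YoungDiagram) (T : ℕ → ℕ → ℕ) : List ℕ :=
  ((List.range (lam.colLen 0)).reverse).flatMap fun r =>
    ((List.range (lam.rowLen r)).filter fun c =>
      decide (IsSkewCell lam mu r c) &&
        ! (decide (IsSkewCell lam mu (r + 1) c) && decide (T (r + 1) c = T r c))).map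
      fun _ => r + 1

namespace List

variable {α β : Type*}

theorem forall_mem_eq_of_flatMap_eq {l : List α} {f g : α → List β}
    (hlen : ∀ a ∈ l, (f a).length = (g a).length) (h : l.flatMap f = l.flatMap g) :
    ∀ a ∈ l, f a = g a := by
  induction l with
  | nil => simp
  | cons a l ih =>
    obtain ⟨hhead, htail⟩ := append_inj h (hlen a mem_cons_self)
    simp only [mem_cons, forall_eq_or_imp]
    exact ⟨hhead, ih (fun b hb => hlen b (mem_cons_of_mem a hb)) htail⟩

variable [LinearOrder β] {p q : α → Bool} {u v : α → β}

theorem map_filter_cons_ne {a : α} {l : List α} (hv : (a :: l).Pairwise fun b c => v b ≤ v c)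
    (hp : p a = true) (hq : q a = false) (hlt : u a < v a) :
    ((a :: l).filter p).map u ≠ ((a :: l).filter q).map v := by
  intro h
  simp only [filter_cons, hp, hq, if_true, Bool.false_eq_true, if_false, map_cons] at h
  obtain ⟨b, hb, hvb⟩ := mem_map.1 (h ▸ mem_cons_self : u a ∈ (l.filter q).map v)
  exact (hlt.trans_le ((pairwise_cons.1 hv).1 b (mem_filter.1 hb).1)).ne' hvb

theorem forall_mem_eq_of_map_filter_eq {l : List α}
    (hu : l.Pairwise fun a b => u a ≤ u b) (hv : l.Pairwise fun a b => v a ≤ v b)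
    (hpq : ∀ a ∈ l, p a = true → q a = false → u a < v a)
    (hqp : ∀ a ∈ l, q a = true → p a = false → v a < u a)
    (hnone : ∀ a ∈ l, p a = false → q a = false → u a = v a)
    (h : (l.filter p).map u = (l.filter q).map v) : ∀ a ∈ l, u a = v a := by
  induction l with
  | nil => simp
  | cons a l ih =>
    have htail := ih (pairwise_cons.1 hu).2 (pairwise_cons.1 hv).2
      (fun b hb => hpq b (mem_cons_of_mem a hb)) (fun b hb => hqp b (mem_cons_of_mem a hb))
      (fun b hb => hnone b (mem_cons_of_mem a hb))
    simp only [mem_cons, forall_eq_or_imp]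
    cases hpa : p a <;> cases hqa : q a
    · simp only [filter_cons, hpa, hqa, Bool.false_eq_true, if_false] at h
      exact ⟨hnone a mem_cons_self hpa hqa, htail h⟩
    · exact absurd h.symm (map_filter_cons_ne hu hqa hpa (hqp a mem_cons_self hqa hpa))
    · exact absurd h (map_filter_cons_ne hv hpa hqa (hpq a mem_cons_self hpa hqa))
    · simp only [filter_cons, hpa, hqa, if_true, map_cons, cons.injEq] at h
      exact ⟨h.1, htail h.2⟩

end List

section ReadingWord

variable {lam mu : YoungDiagram} {S : ℕ → ℕ → ℕ} {r c : ℕ}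

def isRead (lam mu : YoungDiagram) (S : ℕ → ℕ → ℕ) (r c : ℕ) : Bool :=
  decide (IsSkewCell lam mu r c) &&
    ! (decide (IsSkewCell lam mu (r + 1) c) && decide (S (r + 1) c = S r c))

def readCols (lam mu : YoungDiagram) (S : ℕ → ℕ → ℕ) (r : ℕ) : List ℕ :=
  (List.range (lam.rowLen r)).filter (isRead lam mu S r)

theorem isRead_eq_true_iff : isRead lam mu S r c = true ↔
    IsSkewCell lam mu r c ∧ ¬ (IsSkewCell lam mu (r + 1) c ∧ S (r + 1) c = S r c) := by
  simp [isRead, imp_iff_not_or]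

theorem isRead_eq_false_iff : isRead lam mu S r c = false ↔
    IsSkewCell lam mu r c → IsSkewCell lam mu (r + 1) c ∧ S (r + 1) c = S r c := by
  rw [← Bool.not_eq_true, isRead_eq_true_iff]
  tauto

theorem readingWord_eq_flatMap : readingWord lam mu S =
    (List.range (lam.colLen 0)).reverse.flatMap fun r => (readCols lam mu S r).map (S r) :=
  rfl

theorem heightWord_eq_flatMap : heightWord lam mu S =
    (List.range (lam.colLen 0)).reverse.flatMap fun r =>
      List.replicate (readCols lam mu S r).length (r + 1) := by
  simp only [heightWord, List.map_const']
  rfl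

theorem count_heightWord (hr : r < lam.colLen 0) :
    (heightWord lam mu S).count (r + 1) = (readCols lam mu S r).length := by
  rw [heightWord_eq_flatMap, List.count_flatMap]
  simp only [List.map_reverse, List.sum_reverse, Function.comp_def, List.count_replicate,
    beq_iff_eq, Nat.add_right_cancel_iff]
  rw [← List.sum_toFinset _ List.nodup_range]
  simp [hr]

theorem map_readCols_eq_of_readingWord_eq_of_heightWord_eq {S' : ℕ → ℕ → ℕ}
    (hread : readingWord lam mu S = readingWord lam mu S')
    (hheight : heightWord lam mu S = heightWord lam mu S') (hr : r < lam.colLen 0) :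
    (readCols lam mu S r).map (S r) = (readCols lam mu S' r).map (S' r) := by
  rw [readingWord_eq_flatMap, readingWord_eq_flatMap] at hread
  refine List.forall_mem_eq_of_flatMap_eq (f := fun r => (readCols lam mu S r).map (S r))
    (g := fun r => (readCols lam mu S' r).map (S' r)) (fun k hk => ?_) hread r (by simpa using hr)
  have hk' : k < lam.colLen 0 := by simpa using hk
  rw [List.length_map, List.length_map, ← count_heightWord hk', ← count_heightWord hk', hheight]

end ReadingWord

namespace IsSkewRPP

variable {lam mu : YoungDiagram} {m : ℕ} {T T' : ℕ → ℕ → ℕ} {r c : ℕ}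

theorem row_eq_zero (hT : IsSkewRPP lam mu m T) (hr : lam.colLen 0 ≤ r) : T r = 0 := by
  funext c
  refine hT.1 r c fun hc => hr.not_gt ?_
  exact YoungDiagram.mem_iff_lt_colLen.1 (lam.up_left_mem le_rfl c.zero_le hc.1)

theorem monotoneOn_row (hT : IsSkewRPP lam mu m T) :
    MonotoneOn (T r) (Set.Iio (lam.rowLen r)) := by
  refine monotoneOn_of_le_add_one Set.ordConnected_Iio fun c _ hc hc' => ?_
  by_cases hmu : (r, c) ∈ mu
  · rw [hT.1 r c fun h => h.2 hmu]
    exact Nat.zero_le _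
  · have hsucc : (r, c + 1) ∉ mu := fun h => hmu (mu.up_left_mem le_rfl c.le_succ h)
    exact hT.2.2.1 r c ⟨YoungDiagram.mem_iff_lt_rowLen.2 hc, hmu⟩
      ⟨YoungDiagram.mem_iff_lt_rowLen.2 hc', hsucc⟩

theorem pairwise_le_row (hT : IsSkewRPP lam mu m T) :
    (List.range (lam.rowLen r)).Pairwise fun a b => T r a ≤ T r b :=
  List.pairwise_lt_range.imp_of_mem fun ha hb hab =>
    hT.monotoneOn_row (List.mem_range.1 ha) (List.mem_range.1 hb) hab.le

theorem lt_of_isRead_of_not_isRead (hT : IsSkewRPP lam mu m T) (hbelow : T (r + 1) = T' (r + 1))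
    (h : isRead lam mu T r c = true) (h' : isRead lam mu T' r c = false) : T r c < T' r c := by
  obtain ⟨hcell, hne⟩ := isRead_eq_true_iff.1 h
  obtain ⟨hcell_below, heq'⟩ := isRead_eq_false_iff.1 h' hcell
  rw [← heq', ← hbelow]
  exact (hT.2.2.2 r c hcell hcell_below).lt_of_ne fun e => hne ⟨hcell_below, e.symm⟩

theorem eq_of_not_isRead (hT : IsSkewRPP lam mu m T) (hT' : IsSkewRPP lam mu m T')
    (hbelow : T (r + 1) = T' (r + 1))
    (h : isRead lam mu T r c = false) (h' : isRead lam mu T' r c = false) : T r c = T' r c := by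
  by_cases hcell : IsSkewCell lam mu r c
  · rw [← (isRead_eq_false_iff.1 h hcell).2, ← (isRead_eq_false_iff.1 h' hcell).2, hbelow]
  · rw [hT.1 r c hcell, hT'.1 r c hcell]

theorem row_eq_of_map_readCols_eq (hT : IsSkewRPP lam mu m T) (hT' : IsSkewRPP lam mu m T')
    (hbelow : T (r + 1) = T' (r + 1))
    (hread : (readCols lam mu T r).map (T r) = (readCols lam mu T' r).map (T' r)) :
    T r = T' r := by
  funext c
  by_cases hc : c < lam.rowLen r
  · exact List.forall_mem_eq_of_map_filter_eq hT.pairwise_le_row hT'.pairwise_le_row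
      (fun _ _ => hT.lt_of_isRead_of_not_isRead hbelow)
      (fun _ _ => hT'.lt_of_isRead_of_not_isRead hbelow.symm)
      (fun _ _ => hT.eq_of_not_isRead hT' hbelow) hread c (List.mem_range.2 hc)
  · have hcell : ¬ IsSkewCell lam mu r c := fun h => hc (YoungDiagram.mem_iff_lt_rowLen.1 h.1)
    rw [hT.1 r c hcell, hT'.1 r c hcell]

end IsSkewRPP

theorem rpp_unique_of_readingWord_heightWord_general (lam mu : YoungDiagram) (m : ℕ) (h : List ℕ)
    (w : List ℕ) (T T' : ℕ → ℕ → ℕ)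
    (hT : IsSkewRPP lam mu m T) (hT' : IsSkewRPP lam mu m T')
    (hrT : readingWord lam mu T = w) (hrT' : readingWord lam mu T' = w)
    (hhT : heightWord lam mu T = h) (hhT' : heightWord lam mu T' = h) :
    T = T' := by
  have hread := hrT.trans hrT'.symm
  have hheight := hhT.trans hhT'.symm
  funext r
  rcases le_or_gt (lam.colLen 0) r with hr | hr
  · rw [hT.row_eq_zero hr, hT'.row_eq_zero hr]
  · refine Nat.decreasingInduction (motive := fun k _ => T k = T' k) (fun k hk hbelow => ?_)
      (by rw [hT.row_eq_zero le_rfl, hT'.row_eq_zero le_rfl]) hr.le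
    exact hT.row_eq_of_map_readCols_eq hT' hbelow
      (map_readCols_eq_of_readingWord_eq_of_heightWord_eq hread hheight hk)

/-- Fix a skew shape `lam/mu`, `m ≥ 1` and a sequence `h` of positive
integers. For each word `w` over `[m]` there is at most one reverse plane partition `T` of
shape `lam/mu` with entries in `[m]` such that `r(T) = w` and `h(T) = h`. -/
theorem rpp_unique_of_readingWord_heightWord (lam mu : YoungDiagram) (hsub : mu ≤ lam)
    (m : ℕ) (hm : 1 ≤ m) (h : List ℕ) (hh : ∀ x ∈ h, 1 ≤ x)
    (w : List ℕ) (hw : ∀ x ∈ w, 1 ≤ x ∧ x ≤ m)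
    (T T' : ℕ → ℕ → ℕ) (hT : IsSkewRPP lam mu m T) (hT' : IsSkewRPP lam mu m T')
    (hrT : readingWord lam mu T = w) (hrT' : readingWord lam mu T' = w)
    (hhT : heightWord lam mu T = h) (hhT' : heightWord lam mu T' = h) :
    T = T' :=
  rpp_unique_of_readingWord_heightWord_general lam mu m h w T T' hT hT' hrT hrT' hhT hhT'
end

section
/- Fix m, n ≥ 1 and i ∈ [m−1]. If two strings u, u′ ∈ [m]^n are Knuth equivalent, then either E_i(u) and E_i(u′) are both 0 or they are Knuth equivalent; likewise, either F_i(u) and F_i(u′) are both 0 or they are Knuth equivalent. -/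
/-- An elementary Knuth transformation on three consecutive letters:
`xzy ↔ zxy` for `x ≤ y < z`, and `yxz ↔ yzx` for `x < y ≤ z`. -/
inductive KnuthStep : List ℕ → List ℕ → Prop
  | xzy_zxy (a b : List ℕ) (x y z : ℕ) (h1 : x ≤ y) (h2 : y < z) :
      KnuthStep (a ++ x :: z :: y :: b) (a ++ z :: x :: y :: b)
  | yxz_yzx (a b : List ℕ) (x y z : ℕ) (h1 : x < y) (h2 : y ≤ z) :
      KnuthStep (a ++ y :: x :: z :: b) (a ++ y :: z :: x :: b)

/-- Knuth equivalence: the equivalence relation generated by the elementary Knuth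
transformations. -/
def KnuthEquiv : List ℕ → List ℕ → Prop := Relation.EqvGen KnuthStep

/-!
`E_i` acts at the last position `p` where the bracket profile `k ↦ #(i+1) - #i` of the suffix
starting at `k` attains its maximum, provided this maximum is positive. An elementary Knuth
transformation transposes two adjacent letters. When these are not an `i` and an `i+1`, the
bracketing is unchanged and the `E_i`-position travels with its letter; inspecting the
three-letter window shows that the two modified words are again related by the same Knuth
transformation. The two configurations transposing an `i` with an `i+1` (`i (i+1) i ~ (i+1) i i`
and `(i+1) i (i+1) ~ (i+1) (i+1) i`) are checked directly on the profile.

The claim for `F_i` follows by duality: reversing a word and replacing each letter `c` by `N - c`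
exchanges the two kinds of Knuth transformations and turns `F_i` into `E_{N-1-i}`.
-/

def IsLastPositiveMax (f : ℕ → ℤ) (n p : ℕ) : Prop :=
  p < n ∧ 0 < f p ∧ (∀ k ≤ n, f k ≤ f p) ∧ ∀ k ≤ n, p < k → f k < f p

namespace IsLastPositiveMax

variable {f g : ℕ → ℤ} {n p q : ℕ}

theorem unique (hp : IsLastPositiveMax f n p) (hq : IsLastPositiveMax f n q) : p = q := by
  obtain ⟨hpn, -, hpmax, hplast⟩ := hp
  obtain ⟨hqn, -, hqmax, hqlast⟩ := hq
  by_contra hne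
  rcases Nat.lt_or_gt_of_ne hne with h | h
  · linarith [hplast q hqn.le h, hqmax p hpn.le]
  · linarith [hqlast p hpn.le h, hpmax q hqn.le]

theorem exists_of_pos {k : ℕ} (hn : f n ≤ 0) (hk : k ≤ n) (hpos : 0 < f k) :
    ∃ p, IsLastPositiveMax f n p := by
  classical
  have hne : (Finset.range (n + 1)).Nonempty := ⟨0, by simp⟩
  set M := (Finset.range (n + 1)).sup' hne f
  have hle : ∀ k ≤ n, f k ≤ M := fun k hk =>
    Finset.le_sup' f (Finset.mem_range.mpr (Nat.lt_succ_of_le hk))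
  obtain ⟨k₀, hk₀, hk₀M⟩ := Finset.exists_mem_eq_sup' hne f
  have hk₀n : k₀ ≤ n := Nat.lt_succ_iff.mp (Finset.mem_range.mp hk₀)
  set p := Nat.findGreatest (fun k => f k = M) n
  have hpM : f p = M := Nat.findGreatest_spec (P := fun k => f k = M) hk₀n hk₀M.symm
  have hMpos : 0 < M := hpos.trans_le (hle k hk)
  refine ⟨p, lt_of_le_of_ne (Nat.findGreatest_le n) fun h => ?_, hpM ▸ hMpos,
    fun k hk => hpM ▸ hle k hk, fun k hk hpk => ?_⟩
  · rw [h] at hpM; omega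
  · exact hpM ▸ lt_of_le_of_ne (hle k hk) (Nat.findGreatest_is_greatest hpk hk)

theorem of_eq_off {ks : ℕ} (hp : IsLastPositiveMax f n p) (hfg : ∀ k, k ≠ ks → g k = f k)
    (hq : q < n) (hgq : g q = f p) (hks : g ks ≤ f p) (hks' : q < ks → g ks < f p)
    (hmid : ∀ k, q < k → k ≤ p → k ≠ ks → f k < f p) : IsLastPositiveMax g n q := by
  obtain ⟨-, hpos, hmax, hlast⟩ := hp
  refine ⟨hq, hgq ▸ hpos, fun k hk => ?_, fun k hk hqk => ?_⟩ <;> rw [hgq]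
  · rcases eq_or_ne k ks with rfl | hk'
    · exact hks
    · exact hfg k hk' ▸ hmax k hk
  · rcases eq_or_ne k ks with rfl | hk'
    · exact hks' hqk
    · rw [hfg k hk']
      rcases le_or_gt k p with hkp | hkp
      · exact hmid k hqk hkp hk'
      · exact hlast k hk hkp

theorem of_eq_off_self {ks : ℕ} (hp : IsLastPositiveMax f n p) (hfg : ∀ k, k ≠ ks → g k = f k)
    (hpks : p ≠ ks) (hks : g ks ≤ f p) (hks' : p < ks → g ks < f p) :
    IsLastPositiveMax g n p :=
  hp.of_eq_off hfg hp.1 (hfg p hpks) hks hks' fun _ h₁ h₂ _ => absurd h₂ (not_le.mpr h₁)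

end IsLastPositiveMax

def parenWeight (i c : ℕ) : ℤ := if c = i + 1 then 1 else if c = i then -1 else 0

@[simp] theorem parenWeight_self (i : ℕ) : parenWeight i i = -1 := by simp [parenWeight]

@[simp] theorem parenWeight_succ (i : ℕ) : parenWeight i (i + 1) = 1 := by simp [parenWeight]

theorem parenWeight_of_ne {i c : ℕ} (h : c ≠ i) (h' : c ≠ i + 1) : parenWeight i c = 0 := by
  simp [parenWeight, h, h']

theorem suffD_eq_add {i k c : ℕ} {w : List ℕ} (h : w[k]? = some c) :
    suffD i w k = parenWeight i c + suffD i w (k + 1) := by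
  obtain ⟨hk, rfl⟩ := List.getElem?_eq_some_iff.mp h
  simp only [suffD, List.drop_eq_getElem_cons hk, List.count_cons, parenWeight, beq_iff_eq]
  split_ifs <;> omega

theorem suffD_length (i : ℕ) (w : List ℕ) : suffD i w w.length = 0 := by
  simp [suffD]

abbrev IsEPos (i : ℕ) (w : List ℕ) (p : ℕ) : Prop :=
  IsLastPositiveMax (suffD i w) w.length p

theorem IsEPos.getElem? {i p : ℕ} {w : List ℕ} (hp : IsEPos i w p) : w[p]? = some (i + 1) := by
  obtain ⟨hpn, -, -, hlast⟩ := hp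
  have hsucc := suffD_eq_add (i := i) (List.getElem?_eq_getElem hpn)
  have := hlast (p + 1) hpn (Nat.lt_succ_self p)
  rw [List.getElem?_eq_getElem hpn, Option.some_inj]
  by_contra hne
  simp only [parenWeight, hne, if_false] at hsucc
  split_ifs at hsucc <;> omega

theorem IsEPos.isUnmatchedOpen {i p : ℕ} {w : List ℕ} (hp : IsEPos i w p) :
    IsUnmatchedOpen i w p :=
  ⟨hp.getElem?, hp.2.2.2⟩

theorem IsUnmatchedOpen.exists_isEPos {i p : ℕ} {w : List ℕ} (hp : IsUnmatchedOpen i w p) :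
    ∃ q, IsEPos i w q := by
  have hpn : p < w.length := (List.getElem?_eq_some_iff.mp hp.1).1
  have hpos := hp.2 w.length le_rfl hpn
  rw [suffD_length] at hpos
  exact IsLastPositiveMax.exists_of_pos (suffD_length i w).le hpn.le hpos

theorem eop_eq_some_of_isEPos {i p : ℕ} {w : List ℕ} (hp : IsEPos i w p) :
    Eop i w = some (w.set p i) := by
  have hhead : (unmatchedOpens i w).head? = some p := by
    rw [unmatchedOpens, List.head?_filter, List.find?_range_eq_some]
    refine ⟨decide_eq_true hp.isUnmatchedOpen, List.mem_range.mpr hp.1, fun j hjp => ?_⟩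
    simp only [Bool.not_eq_eq_eq_not, Bool.not_true, decide_eq_false_iff_not]
    intro hj
    have := hj.2 p hp.1.le hjp
    have := hp.2.2.1 j (by have := hp.1; omega)
    omega
  simp [Eop, hhead]

theorem eop_eq_none_of_forall_not_isEPos {i : ℕ} {w : List ℕ} (h : ∀ p, ¬ IsEPos i w p) :
    Eop i w = none := by
  have hhead : (unmatchedOpens i w).head? = none := by
    rw [unmatchedOpens, List.head?_filter, List.find?_range_eq_none]
    intro p _
    simp only [Bool.not_eq_eq_eq_not, Bool.not_true, decide_eq_false_iff_not]
    intro hp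
    obtain ⟨q, hq⟩ := hp.exists_isEPos
    exact h q hq
  simp [Eop, hhead]

theorem optionRel_eop_of_isEPos {i : ℕ} {w w' : List ℕ}
    (h : ∀ p, IsEPos i w p → ∃ q, IsEPos i w' q ∧ KnuthEquiv (w.set p i) (w'.set q i))
    (h' : ∀ q, IsEPos i w' q → ∃ p, IsEPos i w p) :
    Option.Rel KnuthEquiv (Eop i w) (Eop i w') := by
  by_cases hw : ∃ p, IsEPos i w p
  · obtain ⟨p, hp⟩ := hw
    obtain ⟨q, hq, hpq⟩ := h p hp
    rw [eop_eq_some_of_isEPos hp, eop_eq_some_of_isEPos hq]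
    exact .some hpq
  · simp only [not_exists] at hw
    rw [eop_eq_none_of_forall_not_isEPos hw,
      eop_eq_none_of_forall_not_isEPos fun q hq => (h' q hq).elim hw]
    exact .none

theorem suffD_swap_of_ne (i c d : ℕ) (a b : List ℕ) {k : ℕ} (hk : k ≠ a.length + 1) :
    suffD i (a ++ d :: c :: b) k = suffD i (a ++ c :: d :: b) k := by
  rcases le_or_gt k a.length with hka | hka
  · have hperm : (d :: c :: b).Perm (c :: d :: b) := .swap c d b
    simp only [suffD, List.drop_append_of_le_length hka, List.count_append, hperm.count_eq]
  · obtain ⟨j, rfl⟩ : ∃ j, k = a.length + 2 + j := ⟨k - (a.length + 2), by omega⟩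
    simp [suffD, Nat.add_assoc, List.drop_append, show 2 + j = j + 1 + 1 by omega]

theorem IsEPos.swap {i c d p : ℕ} {a b : List ℕ}
    (hcd : (c ≠ i ∧ c ≠ i + 1) ∨ (d ≠ i ∧ d ≠ i + 1)) (hp : IsEPos i (a ++ c :: d :: b) p) :
    IsEPos i (a ++ d :: c :: b) (Equiv.swap a.length (a.length + 1) p) := by
  set L := a.length
  have hlen : (a ++ d :: c :: b).length = (a ++ c :: d :: b).length := by simp
  have hfg : ∀ k, k ≠ L + 1 → suffD i (a ++ d :: c :: b) k = suffD i (a ++ c :: d :: b) k :=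
    fun k hk => suffD_swap_of_ne i c d a b hk
  have hf0 : suffD i (a ++ c :: d :: b) L =
      parenWeight i c + suffD i (a ++ c :: d :: b) (L + 1) := suffD_eq_add (c := c) (by simp [L])
  have hf1 : suffD i (a ++ c :: d :: b) (L + 1) =
      parenWeight i d + suffD i (a ++ c :: d :: b) (L + 2) := suffD_eq_add (c := d) (by simp [L])
  have hg1 : suffD i (a ++ d :: c :: b) (L + 1) =
      parenWeight i c + suffD i (a ++ c :: d :: b) (L + 2) := by
    rw [suffD_eq_add (c := c) (by simp [L]), hfg _ (by omega)]
  have hn : L + 2 ≤ (a ++ c :: d :: b).length := by simp [L]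
  have hletter := hp.getElem?
  obtain ⟨hpn, -, hmax, hlast⟩ := id hp
  unfold IsEPos
  rw [hlen]
  by_cases hpL : p = L
  · subst hpL
    obtain rfl : c = i + 1 := by simpa [L] using hletter
    rw [parenWeight_of_ne (by omega) (by omega)] at hf1
    rw [Equiv.swap_apply_left]
    refine hp.of_eq_off hfg (by omega) (by rw [hg1, hf0, hf1]; ring) (by rw [hg1, hf0, hf1]; simp)
      (by omega) (by omega)
  by_cases hpL1 : p = L + 1
  · subst hpL1
    obtain rfl : d = i + 1 := by simpa [L] using hletter
    rw [parenWeight_of_ne (by omega) (by omega)] at hf0 hg1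
    have := hlast (L + 2) hn (by omega)
    rw [Equiv.swap_apply_right]
    exact hp.of_eq_off hfg (by omega) (by rw [hfg L (by omega), hf0]; ring) (by omega) (by omega)
      (by omega)
  · rw [Equiv.swap_apply_of_ne_of_ne hpL hpL1]
    have h0 := hmax L (by omega)
    have h0' := hlast L (by omega)
    have h2 := hmax (L + 2) hn
    have h2' := hlast (L + 2) hn
    refine hp.of_eq_off_self hfg (by omega) ?_ ?_
    all_goals
      rw [hg1]
      rcases hcd with ⟨hci, hci'⟩ | ⟨hdi, hdi'⟩
      · rw [parenWeight_of_ne hci hci']; omega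
      · rw [parenWeight_of_ne hdi hdi'] at hf1
        simp only [parenWeight] at hf0 ⊢
        split_ifs at hf0 ⊢ <;> omega

theorem optionRel_eop_swap {i c d : ℕ} {a b : List ℕ}
    (hcd : (c ≠ i ∧ c ≠ i + 1) ∨ (d ≠ i ∧ d ≠ i + 1))
    (hK : ∀ p, IsEPos i (a ++ c :: d :: b) p → KnuthEquiv ((a ++ c :: d :: b).set p i)
      ((a ++ d :: c :: b).set (Equiv.swap a.length (a.length + 1) p) i)) :
    Option.Rel KnuthEquiv (Eop i (a ++ c :: d :: b)) (Eop i (a ++ d :: c :: b)) :=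
  optionRel_eop_of_isEPos (fun p hp => ⟨_, hp.swap hcd, hK p hp⟩)
    fun _ hq => ⟨_, hq.swap hcd.symm⟩

theorem exists_set_append_cons_cons_cons {a b : List ℕ} {p c : ℕ}
    (hp : p < a.length ∨ a.length + 3 ≤ p) :
    ∃ a' b', ∀ x y z, (a ++ x :: y :: z :: b).set p c = a' ++ x :: y :: z :: b' := by
  rcases hp with hp | hp
  · exact ⟨a.set p c, b, fun x y z => by simp [hp]⟩
  · obtain ⟨j, rfl⟩ : ∃ j, p = a.length + (j + 3) := ⟨p - (a.length + 3), by omega⟩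
    exact ⟨a, b.set j c, fun x y z => by simp⟩

theorem KnuthStep.set_xzy_zxy {a b : List ℕ} {x y z p : ℕ} (hxy : x ≤ y) (hyz : y < z)
    (hp : p < a.length ∨ a.length + 3 ≤ p) (c : ℕ) :
    KnuthStep ((a ++ x :: z :: y :: b).set p c) ((a ++ z :: x :: y :: b).set p c) := by
  obtain ⟨a', b', h⟩ := exists_set_append_cons_cons_cons (b := b) (c := c) hp
  rw [h, h]
  exact .xzy_zxy a' b' x y z hxy hyz

theorem KnuthStep.set_yxz_yzx {a b : List ℕ} {x y z p : ℕ} (hxy : x < y) (hyz : y ≤ z)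
    (hp : p < a.length ∨ a.length + 3 ≤ p) (c : ℕ) :
    KnuthStep ((a ++ y :: x :: z :: b).set p c) ((a ++ y :: z :: x :: b).set p c) := by
  obtain ⟨a', b', h⟩ := exists_set_append_cons_cons_cons (b := b) (c := c) hp
  rw [h, h]
  exact .yxz_yzx a' b' x y z hxy hyz

theorem optionRel_eop_i_succ_i (i : ℕ) (a b : List ℕ) :
    Option.Rel KnuthEquiv (Eop i (a ++ i :: (i + 1) :: i :: b))
      (Eop i (a ++ (i + 1) :: i :: i :: b)) := by
  set L := a.length
  set w := a ++ i :: (i + 1) :: i :: b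
  set w' := a ++ (i + 1) :: i :: i :: b
  have hn : L + 3 ≤ w.length := by simp [L, w]
  have hlen : w'.length = w.length := by simp [w, w']
  have hgf : ∀ k, k ≠ L + 1 → suffD i w' k = suffD i w k :=
    fun k hk => suffD_swap_of_ne i i (i + 1) a (i :: b) hk
  have hfg : ∀ k, k ≠ L + 1 → suffD i w k = suffD i w' k := fun k hk => (hgf k hk).symm
  have hf1 : suffD i w (L + 1) = 1 + suffD i w (L + 2) := by
    simpa using suffD_eq_add (i := i) (c := i + 1) (w := w) (k := L + 1) (by simp [w, L])
  have hf2 : suffD i w (L + 2) = -1 + suffD i w (L + 3) := by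
    simpa using suffD_eq_add (i := i) (c := i) (w := w) (k := L + 2) (by simp [w, L])
  have hg0 : suffD i w' L = 1 + suffD i w' (L + 1) := by
    simpa using suffD_eq_add (i := i) (c := i + 1) (w := w') (k := L) (by simp [w', L])
  have hg1 : suffD i w' (L + 1) = -1 + suffD i w' (L + 2) := by
    simpa using suffD_eq_add (i := i) (c := i) (w := w') (k := L + 1) (by simp [w', L])
  have hg2 := hgf (L + 2) (by omega)
  have hg3 := hgf (L + 3) (by omega)
  refine optionRel_eop_of_isEPos (fun p hp => ⟨p, ?_⟩) fun q hq => ⟨q, ?_⟩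
  · have hpL1 : p ≠ L + 1 := by
      rintro rfl
      have := hp.2.2.2 (L + 3) hn (by omega)
      omega
    have hgp : IsEPos i w' p := by
      unfold IsEPos; rw [hlen]
      exact hp.of_eq_off_self hgf hpL1 (by have := hp.2.2.1 (L + 1) (by omega); omega)
        (fun _ => by have := hp.2.2.1 (L + 1) (by omega); omega)
    have hwindow : p < L ∨ L + 3 ≤ p := by
      have hletter := hp.getElem?
      rcases (by omega : p < L ∨ p = L ∨ p = L + 2 ∨ L + 3 ≤ p) with h | rfl | rfl | h
      · exact .inl h
      · simp [w, L] at hletter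
      · simp [w, L] at hletter
      · exact .inr h
    exact ⟨hgp, .rel _ _ (KnuthStep.set_xzy_zxy le_rfl (Nat.lt_succ_self i) hwindow i)⟩
  · have hqL1 : q ≠ L + 1 := by
      rintro rfl
      have := hq.2.2.1 L (by omega)
      omega
    unfold IsEPos at hq ⊢; rw [hlen] at hq
    exact hq.of_eq_off_self hfg hqL1 (by have := hq.2.2.1 (L + 3) hn; omega)
      (fun h => by have := hq.2.2.2 (L + 3) hn (by omega); omega)

theorem optionRel_eop_xzy_zxy (i : ℕ) (a b : List ℕ) {x y z : ℕ} (hxy : x ≤ y) (hyz : y < z) :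
    Option.Rel KnuthEquiv (Eop i (a ++ x :: z :: y :: b)) (Eop i (a ++ z :: x :: y :: b)) := by
  by_cases hint : x = i ∧ z = i + 1
  · obtain ⟨rfl, rfl⟩ := hint
    obtain rfl : x = y := by omega
    exact optionRel_eop_i_succ_i x a b
  refine optionRel_eop_swap (b := y :: b) (by omega) fun p hp => .rel _ _ ?_
  have hletter := hp.getElem?
  obtain ⟨-, -, hmax, hlast⟩ := hp
  set L := a.length
  have hn : L + 3 ≤ (a ++ x :: z :: y :: b).length := by simp [L]
  have hw0 : suffD i (a ++ x :: z :: y :: b) L =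
      parenWeight i x + suffD i (a ++ x :: z :: y :: b) (L + 1) := suffD_eq_add (by simp [L])
  have hw1 : suffD i (a ++ x :: z :: y :: b) (L + 1) =
      parenWeight i z + suffD i (a ++ x :: z :: y :: b) (L + 2) := suffD_eq_add (by simp [L])
  have hw2 : suffD i (a ++ x :: z :: y :: b) (L + 2) =
      parenWeight i y + suffD i (a ++ x :: z :: y :: b) (L + 3) := suffD_eq_add (by simp [L])
  rcases (by omega : p < L ∨ p = L ∨ p = L + 1 ∨ p = L + 2 ∨ L + 3 ≤ p) with
    h | rfl | rfl | rfl | h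
  · rw [Equiv.swap_apply_of_ne_of_ne (by omega) (by omega)]
    exact .set_xzy_zxy hxy hyz (.inl h) i
  · obtain rfl : x = i + 1 := by simpa [L] using hletter
    simpa [L] using KnuthStep.xzy_zxy a b i y z (by omega) hyz
  · obtain rfl : z = i + 1 := by simpa [L] using hletter
    have hyi : y ≠ i := by
      rintro rfl
      have := hlast (L + 3) hn (by omega)
      simp only [parenWeight_self, parenWeight_succ] at hw1 hw2
      omega
    simpa [L] using KnuthStep.xzy_zxy a b x y i hxy (by omega)
  · obtain rfl : y = i + 1 := by simpa [L] using hletter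
    have hxi : x ≠ i + 1 := by
      rintro rfl
      have := hmax L (by omega)
      rw [parenWeight_of_ne (by omega) (by omega)] at hw1
      simp only [parenWeight_succ] at hw0 hw2
      omega
    rw [Equiv.swap_apply_of_ne_of_ne (by omega) (by omega)]
    simpa [L] using KnuthStep.xzy_zxy a b x i z (by omega) (by omega)
  · rw [Equiv.swap_apply_of_ne_of_ne (by omega) (by omega)]
    exact .set_xzy_zxy hxy hyz (.inr h) i

theorem optionRel_eop_succ_i_succ (i : ℕ) (a b : List ℕ) :
    Option.Rel KnuthEquiv (Eop i (a ++ (i + 1) :: i :: (i + 1) :: b))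
      (Eop i (a ++ (i + 1) :: (i + 1) :: i :: b)) := by
  set L := a.length
  set w := a ++ (i + 1) :: i :: (i + 1) :: b
  set w' := a ++ (i + 1) :: (i + 1) :: i :: b
  have hn : L + 3 ≤ w.length := by simp [L, w]
  have hlen : w'.length = w.length := by simp [w, w']
  have hgf : ∀ k, k ≠ L + 2 → suffD i w' k = suffD i w k := fun k hk => by
    simpa [w, w'] using
      suffD_swap_of_ne i i (i + 1) (a ++ [i + 1]) b (k := k) (by simpa [L] using hk)
  have hfg : ∀ k, k ≠ L + 2 → suffD i w k = suffD i w' k := fun k hk => (hgf k hk).symm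
  have hf0 : suffD i w L = 1 + suffD i w (L + 1) := by
    simpa using suffD_eq_add (i := i) (c := i + 1) (w := w) (k := L) (by simp [w, L])
  have hf1 : suffD i w (L + 1) = -1 + suffD i w (L + 2) := by
    simpa using suffD_eq_add (i := i) (c := i) (w := w) (k := L + 1) (by simp [w, L])
  have hf2 : suffD i w (L + 2) = 1 + suffD i w (L + 3) := by
    simpa using suffD_eq_add (i := i) (c := i + 1) (w := w) (k := L + 2) (by simp [w, L])
  have hg2 : suffD i w' (L + 2) = -1 + suffD i w' (L + 3) := by
    simpa using suffD_eq_add (i := i) (c := i) (w := w') (k := L + 2) (by simp [w', L])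
  have hg0 := hgf L (by omega)
  have hg1 := hgf (L + 1) (by omega)
  have hg3 := hgf (L + 3) (by omega)
  refine optionRel_eop_of_isEPos (fun p hp => ?_) fun q hq => ?_
  · by_cases hpL2 : p = L + 2
    · subst hpL2
      refine ⟨L, ?_, .symm _ _ (.rel _ _ ?_)⟩
      · unfold IsEPos; rw [hlen]
        exact hp.of_eq_off hgf (by omega) (by omega) (by omega) (fun _ => by omega)
          fun k hLk hk hk2 => by rw [show k = L + 1 by omega]; omega
      · simpa [w, w', L] using KnuthStep.xzy_zxy a b i i (i + 1) le_rfl (Nat.lt_succ_self i)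
    · have hgp : IsEPos i w' p := by
        unfold IsEPos; rw [hlen]
        exact hp.of_eq_off_self hgf hpL2 (by have := hp.2.2.1 (L + 2) (by omega); omega)
          (fun _ => by have := hp.2.2.1 (L + 2) (by omega); omega)
      have hwindow : p < L ∨ L + 3 ≤ p := by
        have hletter := hp.getElem?
        rcases (by omega : p < L ∨ p = L ∨ p = L + 1 ∨ L + 3 ≤ p) with h | rfl | rfl | h
        · exact .inl h
        · have := hp.2.2.2 (L + 2) (by omega) (by omega)
          omega
        · simp [w, L] at hletter
        · exact .inr h
      exact ⟨p, hgp, .rel _ _ (KnuthStep.set_yxz_yzx (Nat.lt_succ_self i) le_rfl hwindow i)⟩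
  · have hqL2 : q ≠ L + 2 := by
      rintro rfl
      have hletter := hq.getElem?
      simp [w', L] at hletter
    unfold IsEPos at hq ⊢; rw [hlen] at hq
    by_cases hqL : q = L
    · subst hqL
      exact ⟨L + 2, hq.of_eq_off hfg (by omega) (by omega) (by omega) (by omega) (by omega)⟩
    · have hqL1 : q ≠ L + 1 := by
        rintro rfl
        have := hq.2.2.1 L (by omega)
        omega
      exact ⟨q, hq.of_eq_off_self hfg hqL2 (by have := hq.2.2.1 L (by omega); omega)
        (fun _ => by have := hq.2.2.2 L (by omega) (by omega); omega)⟩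

theorem optionRel_eop_yxz_yzx (i : ℕ) (a b : List ℕ) {x y z : ℕ} (hxy : x < y) (hyz : y ≤ z) :
    Option.Rel KnuthEquiv (Eop i (a ++ y :: x :: z :: b)) (Eop i (a ++ y :: z :: x :: b)) := by
  by_cases hint : x = i ∧ z = i + 1
  · obtain ⟨rfl, rfl⟩ := hint
    obtain rfl : y = x + 1 := by omega
    exact optionRel_eop_succ_i_succ x a b
  have hswap := optionRel_eop_swap (i := i) (a := a ++ [y]) (c := x) (d := z) (b := b) (by omega)
  simp only [List.append_assoc, List.singleton_append, List.length_append,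
    List.length_singleton] at hswap
  refine hswap fun p hp => .rel _ _ ?_
  have hletter := hp.getElem?
  obtain ⟨-, -, hmax, hlast⟩ := hp
  set L := a.length
  have hn : L + 3 ≤ (a ++ y :: x :: z :: b).length := by simp [L]
  have hw0 : suffD i (a ++ y :: x :: z :: b) L =
      parenWeight i y + suffD i (a ++ y :: x :: z :: b) (L + 1) := suffD_eq_add (by simp [L])
  have hw1 : suffD i (a ++ y :: x :: z :: b) (L + 1) =
      parenWeight i x + suffD i (a ++ y :: x :: z :: b) (L + 2) := suffD_eq_add (by simp [L])
  rcases (by omega : p < L ∨ p = L ∨ p = L + 1 ∨ p = L + 2 ∨ L + 3 ≤ p) with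
    h | rfl | rfl | rfl | h
  · rw [Equiv.swap_apply_of_ne_of_ne (by omega) (by omega)]
    exact .set_yxz_yzx hxy hyz (.inl h) i
  · obtain rfl : y = i + 1 := by simpa [L] using hletter
    have hxi : x ≠ i := by
      rintro rfl
      have := hlast (L + 2) (by omega) (by omega)
      simp only [parenWeight_self, parenWeight_succ] at hw0 hw1
      omega
    rw [Equiv.swap_apply_of_ne_of_ne (by omega) (by omega)]
    simpa [L] using KnuthStep.yxz_yzx a b x i z (by omega) (by omega)
  · obtain rfl : x = i + 1 := by simpa [L] using hletter
    simpa [L, Nat.add_assoc] using KnuthStep.yxz_yzx a b i y z (by omega) hyz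
  · obtain rfl : z = i + 1 := by simpa [L] using hletter
    have hyi : y ≠ i + 1 := by
      rintro rfl
      have := hmax L (by omega)
      rw [parenWeight_of_ne (by omega) (by omega)] at hw1
      simp only [parenWeight_succ] at hw0
      omega
    simpa [L] using KnuthStep.yxz_yzx a b x y i hxy (by omega)
  · rw [Equiv.swap_apply_of_ne_of_ne (by omega) (by omega)]
    exact .set_yxz_yzx hxy hyz (.inr h) i

theorem Equivalence.optionRel {α : Type*} {r : α → α → Prop} (h : Equivalence r) :
    Equivalence (Option.Rel r) where
  refl o := by
    cases o with
    | some a => exact .some (h.refl a)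
    | none => exact .none
  symm {_ _} h' := by
    cases h' with
    | some hab => exact .some (h.symm hab)
    | none => exact .none
  trans {_ _ _} h₁ h₂ := by
    cases h₁ with
    | some hab => cases h₂ with | some hbc => exact .some (h.trans hab hbc)
    | none => exact h₂

theorem Option.Rel.eq_none_or_exists {α β : Type*} {r : α → β → Prop} {o : Option α}
    {o' : Option β} (h : Option.Rel r o o') :
    (o = .none ∧ o' = .none) ∨ ∃ a b, o = .some a ∧ o' = .some b ∧ r a b := by
  cases h with
  | some hab => exact .inr ⟨_, _, rfl, rfl, hab⟩
  | none => exact .inl ⟨rfl, rfl⟩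

theorem KnuthEquiv.optionRel {op : List ℕ → Option (List ℕ)}
    (hstep : ∀ w w', KnuthStep w w' → Option.Rel KnuthEquiv (op w) (op w')) {u u' : List ℕ}
    (h : KnuthEquiv u u') : Option.Rel KnuthEquiv (op u) (op u') :=
  ((Relation.EqvGen.is_equivalence KnuthStep).optionRel.comap op).eqvGen_iff.mp
    (Relation.EqvGen.mono hstep _ _ h)

theorem KnuthEquiv.optionRel_eop (i : ℕ) {u u' : List ℕ} (h : KnuthEquiv u u') :
    Option.Rel KnuthEquiv (Eop i u) (Eop i u') :=
  h.optionRel fun _ _ hstep => by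
    cases hstep with
    | xzy_zxy a b x y z hxy hyz => exact optionRel_eop_xzy_zxy i a b hxy hyz
    | yxz_yzx a b x y z hxy hyz => exact optionRel_eop_yxz_yzx i a b hxy hyz

def dualWord (N : ℕ) (w : List ℕ) : List ℕ := (w.map (N - ·)).reverse

@[simp] theorem length_dualWord (N : ℕ) (w : List ℕ) : (dualWord N w).length = w.length := by
  simp [dualWord]

theorem dualWord_dualWord {N : ℕ} {w : List ℕ} (hw : ∀ c ∈ w, c ≤ N) :
    dualWord N (dualWord N w) = w := by
  rw [dualWord, dualWord, List.map_reverse, List.reverse_reverse, List.map_map]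
  exact List.map_congr_left (fun c hc => Nat.sub_sub_self (hw c hc)) |>.trans (List.map_id w)

theorem dualWord_set {N p c : ℕ} {w : List ℕ} (hp : p < w.length) :
    dualWord N (w.set p c) = (dualWord N w).set (w.length - 1 - p) (N - c) := by
  apply List.ext_getElem (by simp)
  intro k hk _
  simp only [dualWord, List.getElem_reverse, List.getElem_map, List.getElem_set, List.length_map,
    List.length_set, List.length_reverse] at hk ⊢
  split_ifs <;> first | rfl | omega

theorem KnuthStep.perm {w w' : List ℕ} (h : KnuthStep w w') : w.Perm w' := by
  cases h with
  | xzy_zxy a b x y z => exact (List.Perm.swap z x (y :: b)).append_left a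
  | yxz_yzx a b x y z => exact ((List.Perm.swap z x b).cons y).append_left a

theorem KnuthEquiv.perm {w w' : List ℕ} (h : KnuthEquiv w w') : w.Perm w' :=
  (List.Perm.eqv _).eqvGen_iff.mp (Relation.EqvGen.mono (fun _ _ => KnuthStep.perm) _ _ h)

theorem KnuthStep.dual {N : ℕ} {w w' : List ℕ} (hw : ∀ c ∈ w, c ≤ N) (h : KnuthStep w w') :
    KnuthStep (dualWord N w) (dualWord N w') := by
  cases h with
  | xzy_zxy a b x y z hxy hyz =>
    have := hw z (by simp)
    simpa [dualWord] using
      KnuthStep.yxz_yzx ((b.map (N - ·)).reverse) ((a.map (N - ·)).reverse) (N - z) (N - y) (N - x)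
        (by omega) (by omega)
  | yxz_yzx a b x y z hxy hyz =>
    have := hw y (by simp)
    simpa [dualWord] using
      KnuthStep.xzy_zxy ((b.map (N - ·)).reverse) ((a.map (N - ·)).reverse) (N - z) (N - y) (N - x)
        (by omega) (by omega)

theorem KnuthEquiv.dual {N : ℕ} {w w' : List ℕ} (hw : ∀ c ∈ w, c ≤ N)
    (h : KnuthEquiv w w') : KnuthEquiv (dualWord N w) (dualWord N w') := by
  induction h with
  | rel _ _ hstep => exact .rel _ _ (hstep.dual hw)
  | refl => exact .refl _
  | symm _ _ hvw ih => exact .symm _ _ (ih fun c hc => hw c ((KnuthEquiv.perm hvw).mem_iff.mp hc))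
  | trans _ _ _ huv _ ih₁ ih₂ =>
    exact .trans _ _ _ (ih₁ hw) (ih₂ fun c hc => hw c ((KnuthEquiv.perm huv).mem_iff.mpr hc))

theorem count_map_sub {N a : ℕ} {l : List ℕ} (hl : ∀ c ∈ l, c ≤ N) (ha : a ≤ N) :
    (l.map (N - ·)).count (N - a) = l.count a := by
  induction l with
  | nil => rfl
  | cons c l ih =>
    have hc := hl c (by simp)
    simp only [List.map_cons, List.count_cons, beq_iff_eq,
      ih fun c hc => hl c (List.mem_cons_of_mem _ hc)]
    have hca : N - c = N - a ↔ c = a := by omega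
    simp only [hca]

theorem prefD_eq_suffD_dualWord {N i k : ℕ} {w : List ℕ} (hw : ∀ c ∈ w, c ≤ N) (hi : i < N)
    (hk : k ≤ w.length) : prefD i w k = suffD (N - 1 - i) (dualWord N w) (w.length - k) := by
  have hwk : ∀ c ∈ w.take k, c ≤ N := fun c hc => hw c (List.mem_of_mem_take hc)
  simp only [prefD, suffD, dualWord, List.drop_reverse, List.length_map, ← List.map_take,
    List.count_reverse, Nat.sub_sub_self hk]
  rw [show N - 1 - i + 1 = N - i by omega, show N - 1 - i = N - (i + 1) by omega,
    count_map_sub hwk hi.le, count_map_sub hwk hi]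

theorem isUnmatchedClose_iff_dualWord {N i p : ℕ} {w : List ℕ} (hw : ∀ c ∈ w, c ≤ N)
    (hi : i < N) (hp : p < w.length) :
    IsUnmatchedClose i w p ↔ IsUnmatchedOpen (N - 1 - i) (dualWord N w) (w.length - 1 - p) := by
  have hletter : w[p]? = some i ↔
      (dualWord N w)[w.length - 1 - p]? = some (N - 1 - i + 1) := by
    have hwp := hw _ (List.getElem_mem hp)
    rw [dualWord, List.getElem?_reverse (by simp; omega), List.getElem?_map, List.length_map,
      show w.length - 1 - (w.length - 1 - p) = p by omega, List.getElem?_eq_getElem hp]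
    simp only [Option.map_some, Option.some_inj]
    omega
  have hpref := fun k (hk : k ≤ w.length) => prefD_eq_suffD_dualWord (k := k) hw hi hk
  rw [IsUnmatchedClose, IsUnmatchedOpen, hletter, length_dualWord, hpref (p + 1) hp,
    show w.length - (p + 1) = w.length - 1 - p by omega]
  refine and_congr_right fun _ => ⟨fun h q hq hpq => ?_, fun h q hq => ?_⟩
  · simpa [hpref _ (Nat.sub_le _ _), Nat.sub_sub_self hq] using h (w.length - q) (by omega)
  · simpa [hpref q (by omega)] using h (w.length - q) (by omega) (by omega)

theorem fop_eq_map_eop_dualWord {N i : ℕ} {w : List ℕ} (hw : ∀ c ∈ w, c ≤ N) (hi : i < N) :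
    Fop i w = (Eop (N - 1 - i) (dualWord N w)).map (dualWord N) := by
  have hlast : (unmatchedCloses i w).getLast? =
      (unmatchedOpens (N - 1 - i) (dualWord N w)).head?.map (w.length - 1 - ·) := by
    rw [unmatchedCloses, unmatchedOpens, List.getLast?_filter, List.head?_filter,
      List.range_eq_range', List.reverse_range', List.find?_map, length_dualWord, Nat.zero_add]
    congr 1
    refine List.find?_congr fun q hq => ?_
    have hq := List.mem_range.mp hq
    simp only [Function.comp_apply, decide_eq_decide]
    rw [isUnmatchedClose_iff_dualWord hw hi (by omega),
      show w.length - 1 - (w.length - 1 - q) = q by omega]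
  unfold Fop Eop
  rw [hlast]
  rcases h : (unmatchedOpens (N - 1 - i) (dualWord N w)).head? with _ | q
  · rfl
  · have hq : q < (dualWord N w).length :=
      List.mem_range.mp (List.mem_filter.mp (List.mem_of_mem_head? h)).1
    simp only [Option.map_some, dualWord_set hq,
      dualWord_dualWord hw, length_dualWord, show N - (N - 1 - i) = i + 1 by omega]

theorem forall_mem_le_of_eop_eq_some {N i : ℕ} {w v : List ℕ} (hE : Eop i w = some v)
    (hw : ∀ c ∈ w, c ≤ N) (hi : i ≤ N) : ∀ c ∈ v, c ≤ N := by
  unfold Eop at hE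
  split at hE
  · cases hE
  · cases hE
    intro c hc
    rcases List.mem_or_eq_of_mem_set hc with hc | rfl
    exacts [hw c hc, hi]

theorem KnuthEquiv.optionRel_fop (i : ℕ) {u u' : List ℕ} (h : KnuthEquiv u u') :
    Option.Rel KnuthEquiv (Fop i u) (Fop i u') := by
  set N := i + 1 + u.sum
  have hu : ∀ c ∈ u, c ≤ N := fun c hc => by have := List.le_sum_of_mem hc; omega
  have hu' : ∀ c ∈ u', c ≤ N := fun c hc => hu c (h.perm.mem_iff.mpr hc)
  have hdu : ∀ c ∈ dualWord N u, c ≤ N := by simp [dualWord]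
  have hrel := (h.dual hu).optionRel_eop (N - 1 - i)
  rw [fop_eq_map_eop_dualWord hu (by omega), fop_eq_map_eop_dualWord hu' (by omega)]
  rcases hrel.eq_none_or_exists with ⟨hE, hE'⟩ | ⟨v, v', hE, hE', hvv'⟩ <;> rw [hE, hE']
  · exact .none
  · exact .some (hvv'.dual (forall_mem_le_of_eop_eq_some hE hdu (by omega)))

theorem knuthEquiv_crystal_general (i : ℕ) (u u' : List ℕ)
    (h : KnuthEquiv u u') :
    ((Eop i u = none ∧ Eop i u' = none) ∨
      ∃ v v', Eop i u = some v ∧ Eop i u' = some v' ∧ KnuthEquiv v v') ∧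
    ((Fop i u = none ∧ Fop i u' = none) ∨
      ∃ v v', Fop i u = some v ∧ Fop i u' = some v' ∧ KnuthEquiv v v') :=
  ⟨(h.optionRel_eop i).eq_none_or_exists, (h.optionRel_fop i).eq_none_or_exists⟩

/-- If `u, u' ∈ [m]^n` are Knuth equivalent, then `E_i(u)` and `E_i(u')`
are both `0` or Knuth equivalent, and likewise for `F_i`. -/
theorem knuthEquiv_crystal (m n i : ℕ) (hm : 1 ≤ m) (hn : 1 ≤ n)
    (hi : 1 ≤ i) (him : i < m) (u u' : List ℕ)
    (hu : u.length = n) (hu1 : IsWordOver m u)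
    (hu' : u'.length = n) (hu1' : IsWordOver m u')
    (h : KnuthEquiv u u') :
    ((Eop i u = none ∧ Eop i u' = none) ∨
      ∃ v v', Eop i u = some v ∧ Eop i u' = some v' ∧ KnuthEquiv v v') ∧
    ((Fop i u = none ∧ Fop i u' = none) ∨
      ∃ v v', Fop i u = some v ∧ Fop i u' = some v' ∧ KnuthEquiv v v') :=
  knuthEquiv_crystal_general i u u' h
end

section
/- Fix m ≥ 1, a partition λ with at most m rows, and i ∈ [m−1]. If T is a semistandard Young tableau of shape λ with entries in [m] and w is its row reading word (rows read left-to-right, from the bottom row to the top row), then whenever E_i(w) ≠ 0 (respectively F_i(w) ≠ 0), E_i(w) (respectively F_i(w)) is the row reading word of a semistandard Young tableau of the same shape λ with entries in [m]. -/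
/-! ### Partitions, semistandard Young tableaux and Schur polynomials -/

/-- `ν : ℕ → ℕ` encodes a partition `(ν 1, ν 2, …)` (the value `ν 0` is normalized to `0`):
the parts weakly decrease and only finitely many are nonzero. -/
def IsPartitionFn (ν : ℕ → ℕ) : Prop :=
  ν 0 = 0 ∧ (∀ j, ν (j + 2) ≤ ν (j + 1)) ∧ ∃ N, ∀ j, N ≤ j → ν j = 0

/-- `S` is a semistandard Young tableau of shape `ν` with entries in `{1, …, m}`: the cells of
the shape are the `(r, c)` (0-based) with `c < ν (r+1)`; entries weakly increase along rows
and strictly increase down columns; `S` is normalized to be `0` outside the shape. -/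
def IsSSYTFn (ν : ℕ → ℕ) (m : ℕ) (S : ℕ → ℕ → ℕ) : Prop :=
  (∀ r c, ¬ c < ν (r + 1) → S r c = 0) ∧
  (∀ r c, c < ν (r + 1) → 1 ≤ S r c ∧ S r c ≤ m) ∧
  (∀ r c, c + 1 < ν (r + 1) → S r c ≤ S r (c + 1)) ∧
  (∀ r c, c < ν (r + 2) → S r c < S (r + 1) c)

/-- The monomial `x^S = ∏_j x_j^(number of entries of S equal to j)` of a semistandard Young
tableau `S` of shape `ν`. -/
noncomputable def ssytMonom (ν : ℕ → ℕ) (S : ℕ → ℕ → ℕ) : MvPolynomial ℕ ℤ :=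
  ∏ᶠ j : ℕ, (MvPolynomial.X j : MvPolynomial ℕ ℤ) ^
    Nat.card {p : ℕ × ℕ // p.2 < ν (p.1 + 1) ∧ S p.1 p.2 = j}

/-- The Schur polynomial `s_ν(x_1, …, x_m)`: the sum of `x^S` over all semistandard Young
tableaux `S` of shape `ν` with entries in `{1, …, m}`. -/
noncomputable def schurPoly (ν : ℕ → ℕ) (m : ℕ) : MvPolynomial ℕ ℤ :=
  ∑ᶠ S : {S : ℕ → ℕ → ℕ // IsSSYTFn ν m S}, ssytMonom ν S.1

/-- The row reading word of a tableau `S` of shape `ν` (a partition with at most `m` rows):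
rows are read left-to-right, from the bottom row to the top row. -/
def rowWord (m : ℕ) (ν : ℕ → ℕ) (S : ℕ → ℕ → ℕ) : List ℕ :=
  ((List.range m).reverse).flatMap fun r => (List.range (ν (r + 1))).map (S r)

/-!
The letter changed by `E_i` (resp. `F_i`) sits in a cell `(r, c)` of the tableau, and after the
change the filling can only fail to be semistandard at one of the four neighbours of that cell.
A neighbour in the same row carrying the same letter would be an unmatched letter further left
(resp. further right), against the choice of the leftmost (resp. rightmost) one. A neighbour in
the same column carrying the other letter forms a vertical domino `i` over `i+1`. Row
monotonicity and column strictness then pair every `i+1` of the run of `i+1`'s starting at the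
domino with the `i` directly above it (resp. every `i` of the run of `i`'s ending at the domino
with the `i+1` directly below it), and the reading word passes from the lower row to the upper
one in between. So the stretch of the reading word from the changed letter to the end of that
run holds at least as many letters of the opposite kind, and the changed letter would be matched.
-/

section Words

variable {i : ℕ}

lemma prefD_append (P seg Q : List ℕ) :
    prefD i (P ++ seg ++ Q) (P.length + seg.length) =
      prefD i (P ++ seg ++ Q) P.length + (seg.count i - seg.count (i + 1)) := by
  have hP : (P ++ seg ++ Q).take P.length = P := by simp
  have hPseg : (P ++ seg ++ Q).take (P.length + seg.length) = P ++ seg :=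
    List.take_left' (by simp)
  simp only [prefD, hP, hPseg, List.count_append]
  push_cast
  ring

lemma suffD_append (P seg Q : List ℕ) :
    suffD i (P ++ seg ++ Q) P.length =
      (seg.count (i + 1) - seg.count i) + suffD i (P ++ seg ++ Q) (P.length + seg.length) := by
  have hP : (P ++ seg ++ Q).drop P.length = seg ++ Q := by simp
  have hPseg : (P ++ seg ++ Q).drop (P.length + seg.length) = Q := by simp
  simp only [suffD, hP, hPseg, List.count_append]
  push_cast
  ring

lemma IsUnmatchedOpen.count_lt {P seg Q : List ℕ} {p : ℕ}
    (h : IsUnmatchedOpen i (P ++ seg ++ Q) p) (hp : p = P.length) (hseg : seg ≠ []) :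
    seg.count i < seg.count (i + 1) := by
  subst hp
  have := h.2 (P.length + seg.length) (by simp)
    (by simpa [Nat.pos_iff_ne_zero] using hseg)
  rw [suffD_append] at this
  omega

lemma IsUnmatchedClose.count_lt {P seg Q : List ℕ} {p : ℕ}
    (h : IsUnmatchedClose i (P ++ seg ++ Q) p) (hp : p + 1 = P.length + seg.length)
    (hseg : seg ≠ []) : seg.count (i + 1) < seg.count i := by
  have := h.2 P.length (by have := List.length_pos_iff.2 hseg; omega)
  rw [hp, prefD_append] at this
  omega

lemma IsUnmatchedOpen.of_succ {w : List ℕ} {p : ℕ} (h : IsUnmatchedOpen i w (p + 1))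
    (hp : w[p]? = some (i + 1)) : IsUnmatchedOpen i w p := by
  have hlt : p < w.length := (List.getElem?_eq_some_iff.1 hp).1
  have hstep : suffD i w p = suffD i w (p + 1) + 1 := by
    rw [List.getElem?_eq_some_iff] at hp
    obtain ⟨_, hp⟩ := hp
    simp only [suffD, List.drop_eq_getElem_cons hlt, hp, List.count_cons_self,
      List.count_cons, beq_iff_eq]
    split_ifs <;> push_cast <;> omega
  refine ⟨hp, fun q hq hpq => ?_⟩
  rcases Nat.lt_or_ge (p + 1) q with h' | h'
  · have := h.2 q hq h'
    omega
  · obtain rfl : q = p + 1 := by omega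
    omega

lemma IsUnmatchedClose.succ {w : List ℕ} {p : ℕ} (h : IsUnmatchedClose i w p)
    (hp : w[p + 1]? = some i) : IsUnmatchedClose i w (p + 1) := by
  have hlt : p + 1 < w.length := (List.getElem?_eq_some_iff.1 hp).1
  have hstep : prefD i w (p + 1 + 1) = prefD i w (p + 1) + 1 := by
    rw [List.getElem?_eq_some_iff] at hp
    obtain ⟨_, hp⟩ := hp
    simp only [prefD, List.take_add_one, List.getElem?_eq_getElem hlt, hp, Option.toList_some,
      List.count_append, List.count_singleton_self, List.count_singleton, beq_iff_eq]
    split_ifs <;> push_cast <;> omega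
  refine ⟨hp, fun q hq => ?_⟩
  rcases Nat.lt_or_ge p q with h' | h'
  · obtain rfl : q = p + 1 := by omega
    omega
  · have := h.2 q h'
    omega

lemma exists_isUnmatchedOpen_of_Eop_eq_some {w v : List ℕ} (h : Eop i w = some v) :
    ∃ p, IsUnmatchedOpen i w p ∧ (∀ q < p, ¬ IsUnmatchedOpen i w q) ∧ w.set p i = v := by
  unfold Eop unmatchedOpens at h
  split at h
  · simp at h
  · rename_i p hp
    simp only [List.head?_filter, List.find?_range_eq_some, decide_eq_true_eq,
      Bool.not_eq_true', decide_eq_false_iff_not] at hp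
    exact ⟨p, hp.1, hp.2.2, Option.some.inj h⟩

lemma exists_isUnmatchedClose_of_Fop_eq_some {w v : List ℕ} (h : Fop i w = some v) :
    ∃ p, IsUnmatchedClose i w p ∧ (∀ q, p < q → ¬ IsUnmatchedClose i w q) ∧
      w.set p (i + 1) = v := by
  unfold Fop unmatchedCloses at h
  split at h
  · simp at h
  · rename_i p hp
    simp only [List.getLast?_filter, List.range_eq_range', List.reverse_range', List.find?_map,
      Option.map_eq_some_iff] at hp
    obtain ⟨j, hj, rfl⟩ := hp
    simp only [zero_add, Function.comp_apply, List.find?_range'_eq_some, decide_eq_true_eq,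
      List.mem_range'_1, zero_le, true_and, Bool.not_eq_eq_eq_not, Bool.not_true,
      decide_eq_false_iff_not, forall_const] at hj
    obtain ⟨hclose, hj, hlast⟩ := hj
    refine ⟨_, hclose, fun q hq hq' => ?_, by simpa using h⟩
    have hqlen : q < w.length := (List.getElem?_eq_some_iff.1 hq'.1).1
    have hq : w.length - 1 - (w.length - 1 - q) = q := by omega
    exact hlast (w.length - 1 - q) (by omega) (by rwa [hq])

end Words

open Finset in
lemma List.count_map_range (f : ℕ → ℕ) (x n : ℕ) :
    ((List.range n).map f).count x = #{j ∈ Finset.range n | f j = x} := by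
  rw [← Multiset.coe_count, ← Multiset.map_coe, Multiset.count_map]
  simp [Finset.card, Finset.filter, eq_comm, Finset.range, Multiset.range]

open Finset in
lemma List.count_map_range' (f : ℕ → ℕ) (x a b : ℕ) :
    ((List.range' a (b - a)).map f).count x = #{j ∈ Finset.Ico a b | f j = x} := by
  rw [← Multiset.coe_count, ← Multiset.map_coe, Multiset.count_map, Nat.Ico_eq_range']
  simp [Finset.card, Finset.filter, eq_comm]

def tableauRow (ν : ℕ → ℕ) (S : ℕ → ℕ → ℕ) (r : ℕ) : List ℕ :=
  (List.range (ν (r + 1))).map (S r)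

def lowerRowsWord (m : ℕ) (ν : ℕ → ℕ) (S : ℕ → ℕ → ℕ) (r : ℕ) : List ℕ :=
  ((List.range' (r + 1) (m - (r + 1))).reverse).flatMap (tableauRow ν S)

section Tableau

open Finset

variable {m : ℕ} {ν : ℕ → ℕ} {S : ℕ → ℕ → ℕ} {i : ℕ}

lemma rowWord_succ (n : ℕ) : rowWord (n + 1) ν S = tableauRow ν S n ++ rowWord n ν S := by
  simp [rowWord, tableauRow, List.range_succ]

lemma lowerRowsWord_self (r : ℕ) : lowerRowsWord (r + 1) ν S r = [] := by
  simp [lowerRowsWord]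

lemma lowerRowsWord_succ {r : ℕ} (h : r < m) :
    lowerRowsWord (m + 1) ν S r = tableauRow ν S m ++ lowerRowsWord m ν S r := by
  obtain ⟨k, rfl⟩ := Nat.exists_eq_add_of_lt h
  simp [lowerRowsWord, show r + k + 1 + 1 - (r + 1) = k + 1 by omega, List.range'_concat,
    show r + 1 + k = r + k + 1 by omega]

lemma rowWord_eq_append {r : ℕ} (h : r < m) :
    rowWord m ν S = lowerRowsWord m ν S r ++ (tableauRow ν S r ++ rowWord r ν S) := by
  induction m, h using Nat.le_induction with
  | base => rw [rowWord_succ, lowerRowsWord_self, List.nil_append]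
  | succ m hrm ih => rw [rowWord_succ, ih, lowerRowsWord_succ hrm, List.append_assoc]

lemma lowerRowsWord_eq_append {r : ℕ} (h : r + 1 < m) :
    lowerRowsWord m ν S r = lowerRowsWord m ν S (r + 1) ++ tableauRow ν S (r + 1) := by
  induction m, h using Nat.le_induction with
  | base => rw [lowerRowsWord_succ (by omega), lowerRowsWord_self, lowerRowsWord_self]; simp
  | succ m hrm ih =>
    rw [lowerRowsWord_succ (by omega), ih, lowerRowsWord_succ hrm, List.append_assoc]

lemma exists_cell_of_lt_length {p : ℕ} (hp : p < (rowWord m ν S).length) :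
    ∃ r < m, ∃ c < ν (r + 1), p = (lowerRowsWord m ν S r).length + c := by
  induction m generalizing p with
  | zero => simp [rowWord] at hp
  | succ m ih =>
    rw [rowWord_succ, List.length_append] at hp
    by_cases hpm : p < (tableauRow ν S m).length
    · exact ⟨m, by omega, p, by simpa [tableauRow] using hpm, by simp [lowerRowsWord_self]⟩
    · obtain ⟨r, hr, c, hc, hpc⟩ := ih (p := p - (tableauRow ν S m).length) (by omega)
      refine ⟨r, by omega, c, hc, ?_⟩
      rw [lowerRowsWord_succ hr, List.length_append]
      omega

lemma rowWord_getElem? {r c : ℕ} (hr : r < m) (hc : c < ν (r + 1)) :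
    (rowWord m ν S)[(lowerRowsWord m ν S r).length + c]? = some (S r c) := by
  rw [rowWord_eq_append hr, List.getElem?_append_right (by omega), Nat.add_sub_cancel_left,
    List.getElem?_append_left (by simpa [tableauRow] using hc)]
  simp [tableauRow, hc]

lemma rowWord_update {r c : ℕ} (x : ℕ) (hr : r < m) (hc : c < ν (r + 1)) :
    rowWord m ν (Function.update S r (Function.update (S r) c x)) =
      (rowWord m ν S).set ((lowerRowsWord m ν S r).length + c) x := by
  set S' := Function.update S r (Function.update (S r) c x)
  have hrow : ∀ j ≠ r, tableauRow ν S' j = tableauRow ν S j := fun j hj => by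
    simp [S', tableauRow, Function.update_of_ne hj]
  have hlower : lowerRowsWord m ν S' r = lowerRowsWord m ν S r :=
    List.flatMap_congr fun j hj => hrow j (by simp at hj; omega)
  have hupper : rowWord r ν S' = rowWord r ν S :=
    List.flatMap_congr fun j hj => hrow j (by simp at hj; omega)
  have hmid : tableauRow ν S' r = (tableauRow ν S r).set c x := by
    apply List.ext_getElem (by simp [tableauRow])
    intro n _ _
    simp [S', tableauRow, List.getElem_set, Function.update_apply, eq_comm]
  rw [rowWord_eq_append hr, rowWord_eq_append hr, hlower, hupper, hmid,
    List.set_append_right _ _ (by omega), Nat.add_sub_cancel_left,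
    List.set_append_left _ _ (by simpa [tableauRow] using hc)]

lemma tableauRow_eq_append {r c : ℕ} (h : c ≤ ν (r + 1)) :
    tableauRow ν S r =
      (List.range c).map (S r) ++ (List.range' c (ν (r + 1) - c)).map (S r) := by
  have hsplit := List.range'_append_1 (s := 0) (m := c) (n := ν (r + 1) - c)
  rw [Nat.zero_add, Nat.add_sub_cancel' h] at hsplit
  rw [tableauRow, ← List.map_append, List.range_eq_range', List.range_eq_range', hsplit]

lemma rowWord_eq_append_segment {r a b : ℕ} (hr : r + 1 < m) (ha : a ≤ ν (r + 2))
    (hb : b ≤ ν (r + 1)) :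
    rowWord m ν S =
      (lowerRowsWord m ν S (r + 1) ++ (List.range a).map (S (r + 1))) ++
        ((List.range' a (ν (r + 2) - a)).map (S (r + 1)) ++ (List.range b).map (S r)) ++
        ((List.range' b (ν (r + 1) - b)).map (S r) ++ rowWord r ν S) := by
  rw [rowWord_eq_append hr, rowWord_succ, tableauRow_eq_append ha, tableauRow_eq_append hb]
  simp only [List.append_assoc]

lemma IsSSYTFn.row_mono (hS : IsSSYTFn ν m S) {r c₁ c₂ : ℕ} (h : c₁ ≤ c₂)
    (h₂ : c₂ < ν (r + 1)) : S r c₁ ≤ S r c₂ := by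
  induction c₂, h using Nat.le_induction with
  | base => rfl
  | succ c _ ih => exact (ih (by omega)).trans (hS.2.2.1 r c h₂)

lemma IsSSYTFn.update (hS : IsSSYTFn ν m S) {r c x : ℕ} (hc : c < ν (r + 1))
    (hx : 1 ≤ x ∧ x ≤ m) (hleft : ∀ c', c' + 1 = c → S r c' ≤ x)
    (hright : c + 1 < ν (r + 1) → x ≤ S r (c + 1)) (habove : ∀ r', r' + 1 = r → S r' c < x)
    (hbelow : c < ν (r + 2) → x < S (r + 1) c) :
    IsSSYTFn ν m (Function.update S r (Function.update (S r) c x)) := by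
  obtain ⟨hout, hbd, hrow, hcol⟩ := hS
  refine ⟨fun r' c' h => ?_, fun r' c' h => ?_, fun r' c' h => ?_, fun r' c' h => ?_⟩
  all_goals simp only [Function.update_apply]; split_ifs <;> subst_vars <;> grind

lemma IsSSYTFn.not_isUnmatchedOpen_of_domino (hS : IsSSYTFn ν m S) {r c : ℕ}
    (hν : ν (r + 2) ≤ ν (r + 1)) (hr : r + 1 < m) (hc : c < ν (r + 2)) (hi : S r c = i)
    (hi1 : S (r + 1) c = i + 1) :
    ¬ IsUnmatchedOpen i (rowWord m ν S) ((lowerRowsWord m ν S (r + 1)).length + c) := by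
  intro hopen
  -- the run of `i+1`'s of row `r+1` starting at column `c` ends at column `b`
  let P j := j < ν (r + 2) ∧ S (r + 1) j = i + 1
  have hPc : P c := ⟨hc, hi1⟩
  set b := Nat.findGreatest P (ν (r + 2))
  obtain ⟨hb, hbi⟩ : P b := Nat.findGreatest_spec hc.le hPc
  have hcb : c ≤ b := Nat.le_findGreatest hc.le hPc
  rw [rowWord_eq_append_segment hr hc.le (b := b + 1) (by omega)] at hopen
  have hcount := hopen.count_lt (by simp) (by simp)
  simp only [List.count_append, List.count_map_range', List.count_map_range] at hcount
  have hzero : #{j ∈ range (b + 1) | S r j = i + 1} = 0 := by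
    refine card_eq_zero.2 (filter_eq_empty_iff.2 fun j hj => ?_)
    have := hS.row_mono (Nat.lt_succ_iff.1 (mem_range.1 hj)) (hb.trans_le hν)
    have := hS.2.2.2 r b hb
    omega
  have hsub :
      {j ∈ Ico c (ν (r + 2)) | S (r + 1) j = i + 1} ⊆ {j ∈ range (b + 1) | S r j = i} := by
    intro j
    simp only [mem_filter, mem_Ico, mem_range, and_imp]
    intro hcj hj hji
    have := Nat.le_findGreatest hj.le (P := P) ⟨hj, hji⟩
    have := hS.row_mono hcj (hj.trans_le hν)
    have := hS.2.2.2 r j hj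
    omega
  have := card_le_card hsub
  omega

lemma IsSSYTFn.not_isUnmatchedClose_of_domino (hS : IsSSYTFn ν m S) {r c : ℕ}
    (hν : ν (r + 2) ≤ ν (r + 1)) (hr : r + 1 < m) (hc : c < ν (r + 2)) (hi : S r c = i)
    (hi1 : S (r + 1) c = i + 1) :
    ¬ IsUnmatchedClose i (rowWord m ν S) ((lowerRowsWord m ν S r).length + c) := by
  intro hclose
  -- the run of `i`'s of row `r` ending at column `c` starts at column `a`
  have hex : ∃ j, S r j = i := ⟨c, hi⟩
  set a := Nat.find hex
  have ha : S r a = i := Nat.find_spec hex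
  have hac : a ≤ c := Nat.find_min' hex hi
  rw [rowWord_eq_append_segment hr (a := a) (b := c + 1) (by omega) (by omega)] at hclose
  have hcount := hclose.count_lt
    (by simp [lowerRowsWord_eq_append hr, tableauRow, show r + 1 + 1 = r + 2 from rfl]; omega)
    (by simp)
  simp only [List.count_append, List.count_map_range', List.count_map_range] at hcount
  have hzero : #{j ∈ Ico a (ν (r + 2)) | S (r + 1) j = i} = 0 := by
    refine card_eq_zero.2 (filter_eq_empty_iff.2 fun j hj => ?_)
    obtain ⟨haj, hj⟩ := mem_Ico.1 hj
    have := hS.row_mono haj hj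
    have := hS.2.2.2 r a (by omega)
    omega
  have hsub :
      {j ∈ range (c + 1) | S r j = i} ⊆ {j ∈ Ico a (ν (r + 2)) | S (r + 1) j = i + 1} := by
    intro j
    simp only [mem_filter, mem_Ico, mem_range, and_imp]
    intro hjc hji
    have := Nat.find_min' hex hji
    have := hS.row_mono (Nat.lt_succ_iff.1 hjc) hc
    have := hS.2.2.2 r j (by omega)
    omega
  have := card_le_card hsub
  omega

lemma IsSSYTFn.update_of_leftmost_unmatchedOpen (hS : IsSSYTFn ν m S)
    (hν : ∀ j, ν (j + 2) ≤ ν (j + 1)) (hi : 1 ≤ i) {r c : ℕ} (hr : r < m)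
    (hc : c < ν (r + 1))
    (hopen : IsUnmatchedOpen i (rowWord m ν S) ((lowerRowsWord m ν S r).length + c))
    (hfirst : ∀ q < (lowerRowsWord m ν S r).length + c,
      ¬ IsUnmatchedOpen i (rowWord m ν S) q) :
    IsSSYTFn ν m (Function.update S r (Function.update (S r) c i)) := by
  have hval : S r c = i + 1 := Option.some.inj ((rowWord_getElem? hr hc).symm.trans hopen.1)
  have hbd := hS.2.1 r c hc
  refine hS.update hc ⟨hi, by omega⟩ ?_ (fun h => ?_) ?_ (fun h => ?_)
  · rintro c' rfl
    have := hS.2.2.1 r c' hc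
    by_contra hlt
    have hc' : S r c' = i + 1 := by omega
    have hprev : IsUnmatchedOpen i (rowWord m ν S) ((lowerRowsWord m ν S r).length + c') :=
      IsUnmatchedOpen.of_succ hopen (by rw [rowWord_getElem? hr (by omega), hc'])
    exact hfirst _ (by omega) hprev
  · have := hS.2.2.1 r c h
    omega
  · rintro r' rfl
    have := hS.2.2.2 r' c hc
    by_contra hlt
    exact hS.not_isUnmatchedOpen_of_domino (hν r') hr hc (by omega) hval hopen
  · have := hS.2.2.2 r c h
    omega

lemma IsSSYTFn.update_of_rightmost_unmatchedClose (hS : IsSSYTFn ν m S)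
    (hν : ∀ j, ν (j + 2) ≤ ν (j + 1)) (hrows : ∀ j, m < j → ν j = 0) (him : i < m)
    {r c : ℕ} (hr : r < m) (hc : c < ν (r + 1))
    (hclose : IsUnmatchedClose i (rowWord m ν S) ((lowerRowsWord m ν S r).length + c))
    (hlast : ∀ q, (lowerRowsWord m ν S r).length + c < q →
      ¬ IsUnmatchedClose i (rowWord m ν S) q) :
    IsSSYTFn ν m (Function.update S r (Function.update (S r) c (i + 1))) := by
  have hval : S r c = i := Option.some.inj ((rowWord_getElem? hr hc).symm.trans hclose.1)
  refine hS.update hc ⟨by omega, by omega⟩ ?_ (fun h => ?_) ?_ (fun h => ?_)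
  · rintro c' rfl
    have := hS.2.2.1 r c' hc
    omega
  · have := hS.2.2.1 r c h
    by_contra hlt
    have hc' : S r (c + 1) = i := by omega
    exact hlast _ (by omega) (hclose.succ (by rw [Nat.add_assoc, rowWord_getElem? hr h, hc']))
  · rintro r' rfl
    have := hS.2.2.2 r' c hc
    omega
  · have := hS.2.2.2 r c h
    have hr' : r + 1 < m := by
      by_contra hrm
      have := hrows (r + 2) (by omega)
      omega
    by_contra hlt
    exact hS.not_isUnmatchedClose_of_domino (hν r) hr' h hval (by omega) hclose

end Tableau

theorem crystal_ops_preserve_ssyt_general (m : ℕ) (ν : ℕ → ℕ)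
    (hν : IsPartitionFn ν) (hrows : ∀ j, m < j → ν j = 0)
    (i : ℕ) (hi : 1 ≤ i) (him : i < m)
    (S : ℕ → ℕ → ℕ) (hS : IsSSYTFn ν m S) :
    (∀ v, Eop i (rowWord m ν S) = some v →
      ∃ S' : ℕ → ℕ → ℕ, IsSSYTFn ν m S' ∧ rowWord m ν S' = v) ∧
    (∀ v, Fop i (rowWord m ν S) = some v →
      ∃ S' : ℕ → ℕ → ℕ, IsSSYTFn ν m S' ∧ rowWord m ν S' = v) := by
  refine ⟨fun v hv => ?_, fun v hv => ?_⟩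
  · obtain ⟨p, hopen, hfirst, rfl⟩ := exists_isUnmatchedOpen_of_Eop_eq_some hv
    obtain ⟨r, hr, c, hc, rfl⟩ :=
      exists_cell_of_lt_length (List.getElem?_eq_some_iff.1 hopen.1).1
    exact ⟨_, hS.update_of_leftmost_unmatchedOpen hν.2.1 hi hr hc hopen hfirst,
      rowWord_update i hr hc⟩
  · obtain ⟨p, hclose, hlast, rfl⟩ := exists_isUnmatchedClose_of_Fop_eq_some hv
    obtain ⟨r, hr, c, hc, rfl⟩ :=
      exists_cell_of_lt_length (List.getElem?_eq_some_iff.1 hclose.1).1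
    exact ⟨_, hS.update_of_rightmost_unmatchedClose hν.2.1 hrows him hr hc hclose hlast,
      rowWord_update (i + 1) hr hc⟩

/-- If `T` is an SSYT of shape `λ` (a partition with at most `m` rows) with
entries in `[m]` and `w` is its row reading word, then whenever `E_i(w) ≠ 0` (resp.
`F_i(w) ≠ 0`), the result is the row reading word of an SSYT of the same shape `λ` with
entries in `[m]`. -/
theorem crystal_ops_preserve_ssyt (m : ℕ) (hm : 1 ≤ m) (ν : ℕ → ℕ)
    (hν : IsPartitionFn ν) (hrows : ∀ j, m < j → ν j = 0)
    (i : ℕ) (hi : 1 ≤ i) (him : i < m)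
    (S : ℕ → ℕ → ℕ) (hS : IsSSYTFn ν m S) :
    (∀ v, Eop i (rowWord m ν S) = some v →
      ∃ S' : ℕ → ℕ → ℕ, IsSSYTFn ν m S' ∧ rowWord m ν S' = v) ∧
    (∀ v, Fop i (rowWord m ν S) = some v →
      ∃ S' : ℕ → ℕ → ℕ, IsSSYTFn ν m S' ∧ rowWord m ν S' = v) :=
  crystal_ops_preserve_ssyt_general m ν hν hrows i hi him S hS
end

section
/- Fix i ≥ 1 and a skew shape λ/μ. Applying a descent-resolution step (of any of the three types (2M), (M1), (21)) to a descent of a benign tableau of shape λ/μ yields again a benign tableau of shape λ/μ, of the same weight, and resolves that descent. -/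
/-! ### Columns, descents and descent-resolution -/

/-- Column `c` of the tableau `T` (of shape `lam/mu`) contains an entry equal to `v`. -/
def ColHasVal (lam mu : YoungDiagram) (T : ℕ → ℕ → ℕ) (c v : ℕ) : Prop :=
  ∃ r ∈ Finset.range (lam.colLen c), IsSkewCell lam mu r c ∧ T r c = v

instance (lam mu : YoungDiagram) (T : ℕ → ℕ → ℕ) (c v : ℕ) :
    Decidable (ColHasVal lam mu T c v) := by
  unfold ColHasVal; infer_instance

/-- Column `c` is `i`-pure: it contains an `i` but no `i+1`. -/
def IsPureLow (i : ℕ) (lam mu : YoungDiagram) (T : ℕ → ℕ → ℕ) (c : ℕ) : Prop :=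
  ColHasVal lam mu T c i ∧ ¬ ColHasVal lam mu T c (i + 1)

/-- Column `c` is `(i+1)`-pure: it contains an `i+1` but no `i`. -/
def IsPureHigh (i : ℕ) (lam mu : YoungDiagram) (T : ℕ → ℕ → ℕ) (c : ℕ) : Prop :=
  ColHasVal lam mu T c (i + 1) ∧ ¬ ColHasVal lam mu T c i

/-- Column `c` is mixed: it contains both an `i` and an `i+1`. -/
def IsMixedCol (i : ℕ) (lam mu : YoungDiagram) (T : ℕ → ℕ → ℕ) (c : ℕ) : Prop :=
  ColHasVal lam mu T c i ∧ ColHasVal lam mu T c (i + 1)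

instance (i : ℕ) (lam mu : YoungDiagram) (T : ℕ → ℕ → ℕ) (c : ℕ) :
    Decidable (IsPureLow i lam mu T c) := by unfold IsPureLow; infer_instance
instance (i : ℕ) (lam mu : YoungDiagram) (T : ℕ → ℕ → ℕ) (c : ℕ) :
    Decidable (IsPureHigh i lam mu T c) := by unfold IsPureHigh; infer_instance

/-- The (0-based) row index of the lowest `i` in column `c`. -/
noncomputable def lowestLow (i : ℕ) (lam mu : YoungDiagram) (T : ℕ → ℕ → ℕ) (c : ℕ) : ℕ :=
  sSup {r | IsSkewCell lam mu r c ∧ T r c = i}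

/-- A descent: the box `(r, c)` contains `i+1` and the box directly to its right contains
`i`. -/
def IsDescent (i : ℕ) (lam mu : YoungDiagram) (T : ℕ → ℕ → ℕ) (r c : ℕ) : Prop :=
  IsSkewCell lam mu r c ∧ IsSkewCell lam mu r (c + 1) ∧ T r c = i + 1 ∧ T r (c + 1) = i

/-- `T` has no descents (for the letters `i`, `i+1`). -/
def NoDescent (i : ℕ) (lam mu : YoungDiagram) (T : ℕ → ℕ → ℕ) : Prop :=
  ∀ r c, ¬ IsDescent i lam mu T r c

/-- The value `v` is `i` or `i+1`. -/
def InBand (i v : ℕ) : Prop := v = i ∨ v = i + 1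

/-- A benign tableau (for the letter `i`): it is `0` outside the shape, all its entries in the
shape are `i` or `i+1`, its entries weakly increase in columns, and for any two mixed columns
`a` (to the left) and `b` (to the right), the lowest `i` of `a` is not in a higher row than
the lowest `i` of `b`. -/
def IsBenign (i : ℕ) (lam mu : YoungDiagram) (T : ℕ → ℕ → ℕ) : Prop :=
  (∀ r c, ¬ IsSkewCell lam mu r c → T r c = 0) ∧
  (∀ r c, IsSkewCell lam mu r c → T r c = i ∨ T r c = i + 1) ∧
  (∀ r c, IsSkewCell lam mu r c → IsSkewCell lam mu (r + 1) c → T r c ≤ T (r + 1) c) ∧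
  (∀ a b, a < b → IsMixedCol i lam mu T a → IsMixedCol i lam mu T b →
    lowestLow i lam mu T a ≤ lowestLow i lam mu T b)

/-- A descent-resolution step at columns `c, c+1` changes no entry outside these two columns,
and no entry whose value is not `i` or `i+1`. -/
def StepFrame (i : ℕ) (lam mu : YoungDiagram) (T T' : ℕ → ℕ → ℕ) (c : ℕ) : Prop :=
  ∀ r c', (¬ (c' = c ∨ c' = c + 1) ∨ ¬ (IsSkewCell lam mu r c' ∧ InBand i (T r c'))) →
    T' r c' = T r c'

/-- Descent-resolution step of type (2M): column `c` is `(i+1)`-pure, column `c+1` is mixed,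
and there is a descent between them; column `c` becomes mixed with its lowest `i` in the same
row as the lowest `i` of column `c+1`, and column `c+1` becomes `(i+1)`-pure. -/
def Step2M (i : ℕ) (lam mu : YoungDiagram) (T T' : ℕ → ℕ → ℕ) (c : ℕ) : Prop :=
  IsPureHigh i lam mu T c ∧ IsMixedCol i lam mu T (c + 1) ∧
  (∃ r, IsDescent i lam mu T r c) ∧ StepFrame i lam mu T T' c ∧
  (∀ r, IsSkewCell lam mu r c → InBand i (T r c) →
    T' r c = if r ≤ lowestLow i lam mu T (c + 1) then i else i + 1) ∧
  (∀ r, IsSkewCell lam mu r (c + 1) → InBand i (T r (c + 1)) → T' r (c + 1) = i + 1)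

/-- Descent-resolution step of type (M1): column `c` is mixed, column `c+1` is `i`-pure,
and there is a descent between them; column `c` becomes `i`-pure, and column `c+1` becomes
mixed with its lowest `i` in the same row as the lowest `i` of column `c`. -/
def StepM1 (i : ℕ) (lam mu : YoungDiagram) (T T' : ℕ → ℕ → ℕ) (c : ℕ) : Prop :=
  IsMixedCol i lam mu T c ∧ IsPureLow i lam mu T (c + 1) ∧
  (∃ r, IsDescent i lam mu T r c) ∧ StepFrame i lam mu T T' c ∧
  (∀ r, IsSkewCell lam mu r c → InBand i (T r c) → T' r c = i) ∧
  (∀ r, IsSkewCell lam mu r (c + 1) → InBand i (T r (c + 1)) →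
    T' r (c + 1) = if r ≤ lowestLow i lam mu T c then i else i + 1)

/-- Descent-resolution step of type (21): column `c` is `(i+1)`-pure, column `c+1` is
`i`-pure, and there is a descent between them; all `i`'s are replaced by `(i+1)`'s and vice
versa in both columns. -/
def Step21 (i : ℕ) (lam mu : YoungDiagram) (T T' : ℕ → ℕ → ℕ) (c : ℕ) : Prop :=
  IsPureHigh i lam mu T c ∧ IsPureLow i lam mu T (c + 1) ∧
  (∃ r, IsDescent i lam mu T r c) ∧ StepFrame i lam mu T T' c ∧
  (∀ r, IsSkewCell lam mu r c → InBand i (T r c) → T' r c = i) ∧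
  (∀ r, IsSkewCell lam mu r (c + 1) → InBand i (T r (c + 1)) → T' r (c + 1) = i + 1)

/-- A descent-resolution step: a step of one of the three types, at some pair of adjacent
columns. -/
def DRStep (i : ℕ) (lam mu : YoungDiagram) (T T' : ℕ → ℕ → ℕ) : Prop :=
  ∃ c, Step2M i lam mu T T' c ∨ StepM1 i lam mu T T' c ∨ Step21 i lam mu T T' c

/-! ### Dual stable Grothendieck polynomials -/

/-- `T(v)`: the number of columns of `T` containing an entry equal to `v`. -/
noncomputable def colCount (lam mu : YoungDiagram) (T : ℕ → ℕ → ℕ) (v : ℕ) : ℕ :=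
  Nat.card {c : ℕ // ∃ r, IsSkewCell lam mu r c ∧ T r c = v}

/-- The monomial `x^T = ∏_j x_j^(T(j))` of a reverse plane partition `T`. -/
noncomputable def rppMonom (lam mu : YoungDiagram) (T : ℕ → ℕ → ℕ) : MvPolynomial ℕ ℤ :=
  ∏ᶠ j : ℕ, (MvPolynomial.X j : MvPolynomial ℕ ℤ) ^ colCount lam mu T j

/-- The dual stable Grothendieck polynomial `g_{lam/mu}(x_1, …, x_m)`: the sum of `x^T` over
all reverse plane partitions `T` of shape `lam/mu` with entries in `{1, …, m}`. -/
noncomputable def dualGroth (lam mu : YoungDiagram) (m : ℕ) : MvPolynomial ℕ ℤ :=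
  ∑ᶠ T : {T : ℕ → ℕ → ℕ // IsSkewRPP lam mu m T}, rppMonom lam mu T.1

/-- A lattice word: in every prefix, every letter `j ≥ 1` occurs at least as many times as
`j + 1`. -/
def IsLatticeWord (w : List ℕ) : Prop :=
  ∀ k j, 1 ≤ j → (w.take k).count (j + 1) ≤ (w.take k).count j

section DRAux

variable {lam mu : YoungDiagram}

lemma skew_corner_low {r1 c1 r2 c2 : ℕ} (h1 : IsSkewCell lam mu r1 c1)
    (h2 : IsSkewCell lam mu r2 c2) (hr : r1 ≤ r2) (hc : c1 ≤ c2) :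
    IsSkewCell lam mu r2 c1 := by
  refine ⟨?_, fun hm => h1.2 ?_⟩
  · exact (YoungDiagram.mem_cells _).mpr
      (lam.up_left_mem le_rfl hc ((YoungDiagram.mem_cells _).mp h2.1))
  · exact (YoungDiagram.mem_cells _).mpr
      (mu.up_left_mem hr le_rfl ((YoungDiagram.mem_cells _).mp hm))

lemma skew_corner_high {r1 c1 r2 c2 : ℕ} (h1 : IsSkewCell lam mu r1 c1)
    (h2 : IsSkewCell lam mu r2 c2) (hr : r1 ≤ r2) (hc : c1 ≤ c2) :
    IsSkewCell lam mu r1 c2 := by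
  refine ⟨?_, fun hm => h1.2 ?_⟩
  · exact (YoungDiagram.mem_cells _).mpr
      (lam.up_left_mem hr le_rfl ((YoungDiagram.mem_cells _).mp h2.1))
  · exact (YoungDiagram.mem_cells _).mpr
      (mu.up_left_mem le_rfl hc ((YoungDiagram.mem_cells _).mp hm))

lemma skew_col_convex {r1 r2 r c : ℕ} (h1 : IsSkewCell lam mu r1 c)
    (h2 : IsSkewCell lam mu r2 c) (hl : r1 ≤ r) (hu : r ≤ r2) :
    IsSkewCell lam mu r c := by
  refine ⟨?_, fun hm => h1.2 ?_⟩
  · exact (YoungDiagram.mem_cells _).mpr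
      (lam.up_left_mem hu le_rfl ((YoungDiagram.mem_cells _).mp h2.1))
  · exact (YoungDiagram.mem_cells _).mpr
      (mu.up_left_mem hl le_rfl ((YoungDiagram.mem_cells _).mp hm))

lemma skew_col_le {T : ℕ → ℕ → ℕ}
    (hmono : ∀ r c, IsSkewCell lam mu r c → IsSkewCell lam mu (r + 1) c →
      T r c ≤ T (r + 1) c)
    {r1 r2 c : ℕ} (h1 : IsSkewCell lam mu r1 c) (h2 : IsSkewCell lam mu r2 c)
    (h : r1 ≤ r2) : T r1 c ≤ T r2 c := by
  have key : ∀ r2, r1 ≤ r2 → IsSkewCell lam mu r2 c → T r1 c ≤ T r2 c := by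
    intro r2 h
    induction r2, h using Nat.le_induction with
    | base => intro _; exact le_rfl
    | succ n hn ih =>
      intro h2
      have hcell : IsSkewCell lam mu n c := skew_col_convex h1 h2 hn (Nat.le_succ n)
      exact le_trans (ih hcell) (hmono n c hcell h2)
  exact key r2 h h2

lemma bddAbove_colSet (T : ℕ → ℕ → ℕ) (c v : ℕ) :
    BddAbove {r | IsSkewCell lam mu r c ∧ T r c = v} :=
  ⟨lam.colLen c, fun r hr =>
    le_of_lt (YoungDiagram.mem_iff_lt_colLen.mp ((YoungDiagram.mem_cells _).mp hr.1.1))⟩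

lemma le_lowestLow {i : ℕ} {T : ℕ → ℕ → ℕ} {r c : ℕ} (h1 : IsSkewCell lam mu r c)
    (h2 : T r c = i) : r ≤ lowestLow i lam mu T c :=
  le_csSup (bddAbove_colSet T c i) ⟨h1, h2⟩

lemma lowestLow_mem {i : ℕ} {T : ℕ → ℕ → ℕ} {c : ℕ}
    (h : ∃ r, IsSkewCell lam mu r c ∧ T r c = i) :
    IsSkewCell lam mu (lowestLow i lam mu T c) c ∧ T (lowestLow i lam mu T c) c = i :=
  Nat.sSup_mem h (bddAbove_colSet T c i)

lemma colHasVal_iff {T : ℕ → ℕ → ℕ} {c v : ℕ} :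
    ColHasVal lam mu T c v ↔ ∃ r, IsSkewCell lam mu r c ∧ T r c = v := by
  constructor
  · rintro ⟨r, _, h1, h2⟩; exact ⟨r, h1, h2⟩
  · rintro ⟨r, h1, h2⟩
    exact ⟨r, Finset.mem_range.mpr
      (YoungDiagram.mem_iff_lt_colLen.mp ((YoungDiagram.mem_cells _).mp h1.1)), h1, h2⟩

lemma colHasVal_congr {T T' : ℕ → ℕ → ℕ} {c v : ℕ}
    (h : ∀ r, T' r c = T r c) : ColHasVal lam mu T' c v ↔ ColHasVal lam mu T c v := by
  unfold ColHasVal; simp only [h]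

lemma mixed_congr {i : ℕ} {T T' : ℕ → ℕ → ℕ} {c : ℕ}
    (h : ∀ r, T' r c = T r c) : IsMixedCol i lam mu T' c ↔ IsMixedCol i lam mu T c :=
  and_congr (colHasVal_congr h) (colHasVal_congr h)

lemma lowestLow_congr {i : ℕ} {T T' : ℕ → ℕ → ℕ} {c : ℕ}
    (h : ∀ r, T' r c = T r c) : lowestLow i lam mu T' c = lowestLow i lam mu T c := by
  unfold lowestLow
  congr 1
  ext r
  rw [Set.mem_setOf_eq, Set.mem_setOf_eq, h r]

lemma sSup_eq_of {S : Set ℕ} {L : ℕ} (hL : L ∈ S) (hub : ∀ x ∈ S, x ≤ L) :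
    sSup S = L :=
  le_antisymm (csSup_le ⟨L, hL⟩ hub) (le_csSup ⟨L, hub⟩ hL)

lemma colCount_eq_of_swap {T T' : ℕ → ℕ → ℕ} {c : ℕ}
    (h : ∀ v c', (∃ r, IsSkewCell lam mu r c' ∧ T' r c' = v) ↔
      (∃ r, IsSkewCell lam mu r (Equiv.swap c (c + 1) c') ∧
        T r (Equiv.swap c (c + 1) c') = v)) :
    ∀ v, colCount lam mu T' v = colCount lam mu T v := by
  intro v
  unfold colCount
  exact Nat.card_congr ((Equiv.swap c (c + 1)).subtypeEquiv fun c' => h v c')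

lemma benign_parts {i : ℕ} {T T' : ℕ → ℕ → ℕ} {c : ℕ} (hT : IsBenign i lam mu T)
    (hframe : StepFrame i lam mu T T' c) (f g : ℕ → ℕ)
    (hf : ∀ r, IsSkewCell lam mu r c → InBand i (T r c) → T' r c = f r)
    (hg : ∀ r, IsSkewCell lam mu r (c + 1) → InBand i (T r (c + 1)) → T' r (c + 1) = g r)
    (hfb : ∀ r, InBand i (f r)) (hgb : ∀ r, InBand i (g r))
    (hfm : Monotone f) (hgm : Monotone g) :
    (∀ r c', ¬ IsSkewCell lam mu r c' → T' r c' = 0) ∧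
    (∀ r c', IsSkewCell lam mu r c' → T' r c' = i ∨ T' r c' = i + 1) ∧
    (∀ r c', IsSkewCell lam mu r c' → IsSkewCell lam mu (r + 1) c' →
      T' r c' ≤ T' (r + 1) c') := by
  obtain ⟨hz, hb, hm, _⟩ := hT
  have hband : ∀ r c', IsSkewCell lam mu r c' → InBand i (T r c') := fun r c' h =>
    hb r c' h
  have heq : ∀ r c', ¬ (c' = c ∨ c' = c + 1) → T' r c' = T r c' :=
    fun r c' h => hframe r c' (Or.inl h)
  refine ⟨?_, ?_, ?_⟩
  · intro r c' hnc
    rw [hframe r c' (Or.inr fun hh => hnc hh.1), hz r c' hnc]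
  · intro r c' hcell
    by_cases h1 : c' = c
    · subst h1; rw [hf r hcell (hband r _ hcell)]; exact hfb r
    by_cases h2 : c' = c + 1
    · subst h2; rw [hg r hcell (hband r _ hcell)]; exact hgb r
    · rw [heq r c' (by tauto)]; exact hb r c' hcell
  · intro r c' hcell hcell'
    by_cases h1 : c' = c
    · subst h1
      rw [hf r hcell (hband r _ hcell), hf (r + 1) hcell' (hband _ _ hcell')]
      exact hfm (Nat.le_succ r)
    by_cases h2 : c' = c + 1
    · subst h2
      rw [hg r hcell (hband r _ hcell), hg (r + 1) hcell' (hband _ _ hcell')]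
      exact hgm (Nat.le_succ r)
    · rw [heq r c' (by tauto), heq (r + 1) c' (by tauto)]
      exact hm r c' hcell hcell'

end DRAux

/-- Applying a descent-resolution step (of any of the three types) to a
descent of a benign tableau of shape `lam/mu` yields again a benign tableau of shape
`lam/mu`, of the same weight, and resolves that descent (no descent remains between the two
columns involved). -/
theorem drstep_benign (i : ℕ) (hi : 1 ≤ i) (lam mu : YoungDiagram) (hsub : mu ≤ lam)
    (T T' : ℕ → ℕ → ℕ) (hT : IsBenign i lam mu T) (c : ℕ)
    (hstep : Step2M i lam mu T T' c ∨ StepM1 i lam mu T T' c ∨ Step21 i lam mu T T' c) :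
    IsBenign i lam mu T' ∧ (∀ v, colCount lam mu T' v = colCount lam mu T v) ∧
      ∀ r, ¬ IsDescent i lam mu T' r c := by
  obtain ⟨hz, hb, hm, hmx⟩ := hT
  rcases hstep with h | h | h
  · -- Step2M
    obtain ⟨hPH, hMix, ⟨r₀, hd⟩, hframe, hfc, hfc1⟩ := h
    obtain ⟨hdc, hdc1, hv1, hv2⟩ := hd
    set L := lowestLow i lam mu T (c + 1) with hLdef
    have hr₀L : r₀ ≤ L := le_lowestLow hdc1 hv2
    have hLmem := lowestLow_mem (colHasVal_iff.mp hMix.1)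
    obtain ⟨r₂, hc2, hv3⟩ := colHasVal_iff.mp hMix.2
    have hLr₂ : L < r₂ := by
      by_contra hcon
      push_neg at hcon
      have := skew_col_le hm hc2 hLmem.1 hcon
      omega
    have hcellL1c1 : IsSkewCell lam mu (L + 1) (c + 1) :=
      skew_col_convex hLmem.1 hc2 (Nat.le_succ L) hLr₂
    have hcellL1c : IsSkewCell lam mu (L + 1) c :=
      skew_corner_low hdc hcellL1c1 (by omega) (Nat.le_succ c)
    have hcellLc : IsSkewCell lam mu L c :=
      skew_col_convex hdc hcellL1c hr₀L (Nat.le_succ L)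
    have val_c : ∀ r, IsSkewCell lam mu r c → T' r c = if r ≤ L then i else i + 1 :=
      fun r hr => hfc r hr (hb r c hr)
    have val_c1 : ∀ r, IsSkewCell lam mu r (c + 1) → T' r (c + 1) = i + 1 :=
      fun r hr => hfc1 r hr (hb r (c + 1) hr)
    have mT'i_c : ∃ r, IsSkewCell lam mu r c ∧ T' r c = i :=
      ⟨r₀, hdc, by rw [val_c r₀ hdc, if_pos hr₀L]⟩
    have mT'1_c : ∃ r, IsSkewCell lam mu r c ∧ T' r c = i + 1 :=
      ⟨L + 1, hcellL1c, by rw [val_c _ hcellL1c, if_neg (by omega)]⟩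
    have mT'i_c1 : ¬ ∃ r, IsSkewCell lam mu r (c + 1) ∧ T' r (c + 1) = i := by
      rintro ⟨r, hr, he⟩
      rw [val_c1 r hr] at he
      omega
    have mT'1_c1 : ∃ r, IsSkewCell lam mu r (c + 1) ∧ T' r (c + 1) = i + 1 :=
      ⟨L, hLmem.1, val_c1 L hLmem.1⟩
    have hsame : ∀ c', c' ≠ c → c' ≠ c + 1 → ∀ r, T' r c' = T r c' :=
      fun c' h1 h2 r => hframe r c' (Or.inl (by tauto))
    have hparts := benign_parts ⟨hz, hb, hm, hmx⟩ hframe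
      (fun r => if r ≤ L then i else i + 1) (fun _ => i + 1) hfc hfc1
      (fun r => by unfold InBand; split_ifs <;> simp)
      (fun _ => Or.inr rfl)
      (fun a b hab => by dsimp only; split_ifs <;> omega)
      monotone_const
    have hL'c : lowestLow i lam mu T' c = L := by
      unfold lowestLow
      apply sSup_eq_of
      · exact ⟨hcellLc, by rw [val_c L hcellLc, if_pos le_rfl]⟩
      · rintro x ⟨hx, he⟩
        by_contra hcon
        rw [val_c x hx, if_neg hcon] at he
        omega
    have notMixed_c1 : ¬ IsMixedCol i lam mu T' (c + 1) := fun hmx' =>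
      mT'i_c1 (colHasVal_iff.mp hmx'.1)
    have cond4 : ∀ a b, a < b → IsMixedCol i lam mu T' a → IsMixedCol i lam mu T' b →
        lowestLow i lam mu T' a ≤ lowestLow i lam mu T' b := by
      intro a b hab hma hmb
      have hb1 : b ≠ c + 1 := fun hh => notMixed_c1 (hh ▸ hmb)
      have ha1 : a ≠ c + 1 := fun hh => notMixed_c1 (hh ▸ hma)
      by_cases hbc : b = c
      · rw [hbc] at hab ⊢
        have hac : a ≠ c := Nat.ne_of_lt hab
        rw [lowestLow_congr (hsame a hac ha1), hL'c]
        exact hmx a (c + 1) (by omega) ((mixed_congr (hsame a hac ha1)).mp hma) hMix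
      by_cases hac : a = c
      · rw [hac] at hab ⊢
        rw [hL'c, lowestLow_congr (hsame b hbc hb1)]
        exact hmx (c + 1) b (by omega) hMix ((mixed_congr (hsame b hbc hb1)).mp hmb)
      · rw [lowestLow_congr (hsame a hac ha1), lowestLow_congr (hsame b hbc hb1)]
        exact hmx a b hab ((mixed_congr (hsame a hac ha1)).mp hma)
          ((mixed_congr (hsame b hbc hb1)).mp hmb)
    have hswap : ∀ v c', (∃ r, IsSkewCell lam mu r c' ∧ T' r c' = v) ↔
        (∃ r, IsSkewCell lam mu r (Equiv.swap c (c + 1) c') ∧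
          T r (Equiv.swap c (c + 1) c') = v) := by
      intro v c'
      by_cases h1 : c' = c
      · rw [h1, Equiv.swap_apply_left]
        by_cases hvi : v = i
        · rw [hvi]
          exact iff_of_true mT'i_c (colHasVal_iff.mp hMix.1)
        by_cases hv1 : v = i + 1
        · rw [hv1]
          exact iff_of_true mT'1_c (colHasVal_iff.mp hMix.2)
        · refine iff_of_false ?_ ?_
          · rintro ⟨r, hr, he⟩
            rcases hparts.2.1 r c hr with hh | hh <;> omega
          · rintro ⟨r, hr, he⟩
            rcases hb r (c + 1) hr with hh | hh <;> omega
      by_cases h2 : c' = c + 1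
      · rw [h2, Equiv.swap_apply_right]
        by_cases hvi : v = i
        · rw [hvi]
          exact iff_of_false mT'i_c1 fun hh => hPH.2 (colHasVal_iff.mpr hh)
        by_cases hv1 : v = i + 1
        · rw [hv1]
          exact iff_of_true mT'1_c1 (colHasVal_iff.mp hPH.1)
        · refine iff_of_false ?_ ?_
          · rintro ⟨r, hr, he⟩
            rcases hparts.2.1 r (c + 1) hr with hh | hh <;> omega
          · rintro ⟨r, hr, he⟩
            rcases hb r c hr with hh | hh <;> omega
      · rw [Equiv.swap_apply_of_ne_of_ne h1 h2]
        simp only [hsame c' h1 h2]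
    refine ⟨⟨hparts.1, hparts.2.1, hparts.2.2, cond4⟩, colCount_eq_of_swap hswap, ?_⟩
    rintro r ⟨h1, h2, h3, h4⟩
    rw [val_c1 r h2] at h4
    omega
  · -- StepM1
    obtain ⟨hMix, hPL, ⟨r₀, hd⟩, hframe, hfc, hfc1⟩ := h
    obtain ⟨hdc, hdc1, hv1, hv2⟩ := hd
    set L := lowestLow i lam mu T c with hLdef
    have hLmem := lowestLow_mem (colHasVal_iff.mp hMix.1)
    have hLr₀ : L < r₀ := by
      by_contra hcon
      push_neg at hcon
      have := skew_col_le hm hdc hLmem.1 hcon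
      omega
    have hcellLc1 : IsSkewCell lam mu L (c + 1) :=
      skew_corner_high hLmem.1 hdc1 (le_of_lt hLr₀) (Nat.le_succ c)
    have val_c : ∀ r, IsSkewCell lam mu r c → T' r c = i :=
      fun r hr => hfc r hr (hb r c hr)
    have val_c1 : ∀ r, IsSkewCell lam mu r (c + 1) →
        T' r (c + 1) = if r ≤ L then i else i + 1 :=
      fun r hr => hfc1 r hr (hb r (c + 1) hr)
    have mT'i_c : ∃ r, IsSkewCell lam mu r c ∧ T' r c = i :=
      ⟨L, hLmem.1, val_c L hLmem.1⟩
    have mT'1_c : ¬ ∃ r, IsSkewCell lam mu r c ∧ T' r c = i + 1 := by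
      rintro ⟨r, hr, he⟩
      rw [val_c r hr] at he
      omega
    have mT'i_c1 : ∃ r, IsSkewCell lam mu r (c + 1) ∧ T' r (c + 1) = i :=
      ⟨L, hcellLc1, by rw [val_c1 L hcellLc1, if_pos le_rfl]⟩
    have mT'1_c1 : ∃ r, IsSkewCell lam mu r (c + 1) ∧ T' r (c + 1) = i + 1 :=
      ⟨r₀, hdc1, by rw [val_c1 r₀ hdc1, if_neg (by omega)]⟩
    have hsame : ∀ c', c' ≠ c → c' ≠ c + 1 → ∀ r, T' r c' = T r c' :=
      fun c' h1 h2 r => hframe r c' (Or.inl (by tauto))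
    have hparts := benign_parts ⟨hz, hb, hm, hmx⟩ hframe
      (fun _ => i) (fun r => if r ≤ L then i else i + 1) hfc hfc1
      (fun _ => Or.inl rfl)
      (fun r => by unfold InBand; split_ifs <;> simp)
      monotone_const
      (fun a b hab => by dsimp only; split_ifs <;> omega)
    have hL'c1 : lowestLow i lam mu T' (c + 1) = L := by
      unfold lowestLow
      apply sSup_eq_of
      · exact ⟨hcellLc1, by rw [val_c1 L hcellLc1, if_pos le_rfl]⟩
      · rintro x ⟨hx, he⟩
        by_contra hcon
        rw [val_c1 x hx, if_neg hcon] at he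
        omega
    have notMixed_c : ¬ IsMixedCol i lam mu T' c := fun hmx' =>
      mT'1_c (colHasVal_iff.mp hmx'.2)
    have cond4 : ∀ a b, a < b → IsMixedCol i lam mu T' a → IsMixedCol i lam mu T' b →
        lowestLow i lam mu T' a ≤ lowestLow i lam mu T' b := by
      intro a b hab hma hmb
      have hb0 : b ≠ c := fun hh => notMixed_c (hh ▸ hmb)
      have ha0 : a ≠ c := fun hh => notMixed_c (hh ▸ hma)
      by_cases hbc : b = c + 1
      · rw [hbc] at hab ⊢
        have hac : a ≠ c + 1 := Nat.ne_of_lt hab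
        rw [lowestLow_congr (hsame a ha0 hac), hL'c1]
        exact hmx a c (by omega) ((mixed_congr (hsame a ha0 hac)).mp hma) hMix
      by_cases hac : a = c + 1
      · rw [hac] at hab ⊢
        rw [hL'c1, lowestLow_congr (hsame b hb0 hbc)]
        exact hmx c b (by omega) hMix ((mixed_congr (hsame b hb0 hbc)).mp hmb)
      · rw [lowestLow_congr (hsame a ha0 hac), lowestLow_congr (hsame b hb0 hbc)]
        exact hmx a b hab ((mixed_congr (hsame a ha0 hac)).mp hma)
          ((mixed_congr (hsame b hb0 hbc)).mp hmb)
    have hswap : ∀ v c', (∃ r, IsSkewCell lam mu r c' ∧ T' r c' = v) ↔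
        (∃ r, IsSkewCell lam mu r (Equiv.swap c (c + 1) c') ∧
          T r (Equiv.swap c (c + 1) c') = v) := by
      intro v c'
      by_cases h1 : c' = c
      · rw [h1, Equiv.swap_apply_left]
        by_cases hvi : v = i
        · rw [hvi]
          exact iff_of_true mT'i_c (colHasVal_iff.mp hPL.1)
        by_cases hv1 : v = i + 1
        · rw [hv1]
          exact iff_of_false mT'1_c fun hh => hPL.2 (colHasVal_iff.mpr hh)
        · refine iff_of_false ?_ ?_
          · rintro ⟨r, hr, he⟩
            rcases hparts.2.1 r c hr with hh | hh <;> omega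
          · rintro ⟨r, hr, he⟩
            rcases hb r (c + 1) hr with hh | hh <;> omega
      by_cases h2 : c' = c + 1
      · rw [h2, Equiv.swap_apply_right]
        by_cases hvi : v = i
        · rw [hvi]
          exact iff_of_true mT'i_c1 (colHasVal_iff.mp hMix.1)
        by_cases hv1 : v = i + 1
        · rw [hv1]
          exact iff_of_true mT'1_c1 (colHasVal_iff.mp hMix.2)
        · refine iff_of_false ?_ ?_
          · rintro ⟨r, hr, he⟩
            rcases hparts.2.1 r (c + 1) hr with hh | hh <;> omega
          · rintro ⟨r, hr, he⟩
            rcases hb r c hr with hh | hh <;> omega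
      · rw [Equiv.swap_apply_of_ne_of_ne h1 h2]
        simp only [hsame c' h1 h2]
    refine ⟨⟨hparts.1, hparts.2.1, hparts.2.2, cond4⟩, colCount_eq_of_swap hswap, ?_⟩
    rintro r ⟨h1, h2, h3, h4⟩
    rw [val_c r h1] at h3
    omega
  · -- Step21
    obtain ⟨hPH, hPL, ⟨r₀, hd⟩, hframe, hfc, hfc1⟩ := h
    obtain ⟨hdc, hdc1, hv1, hv2⟩ := hd
    obtain ⟨r₁, hcr₁, hvr₁⟩ := colHasVal_iff.mp hPH.1
    obtain ⟨r₂, hcr₂, hvr₂⟩ := colHasVal_iff.mp hPL.1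
    have val_c : ∀ r, IsSkewCell lam mu r c → T' r c = i :=
      fun r hr => hfc r hr (hb r c hr)
    have val_c1 : ∀ r, IsSkewCell lam mu r (c + 1) → T' r (c + 1) = i + 1 :=
      fun r hr => hfc1 r hr (hb r (c + 1) hr)
    have mT'i_c : ∃ r, IsSkewCell lam mu r c ∧ T' r c = i := ⟨r₁, hcr₁, val_c r₁ hcr₁⟩
    have mT'1_c : ¬ ∃ r, IsSkewCell lam mu r c ∧ T' r c = i + 1 := by
      rintro ⟨r, hr, he⟩
      rw [val_c r hr] at he
      omega
    have mT'i_c1 : ¬ ∃ r, IsSkewCell lam mu r (c + 1) ∧ T' r (c + 1) = i := by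
      rintro ⟨r, hr, he⟩
      rw [val_c1 r hr] at he
      omega
    have mT'1_c1 : ∃ r, IsSkewCell lam mu r (c + 1) ∧ T' r (c + 1) = i + 1 :=
      ⟨r₂, hcr₂, val_c1 r₂ hcr₂⟩
    have hsame : ∀ c', c' ≠ c → c' ≠ c + 1 → ∀ r, T' r c' = T r c' :=
      fun c' h1 h2 r => hframe r c' (Or.inl (by tauto))
    have hparts := benign_parts ⟨hz, hb, hm, hmx⟩ hframe
      (fun _ => i) (fun _ => i + 1) hfc hfc1
      (fun _ => Or.inl rfl) (fun _ => Or.inr rfl) monotone_const monotone_const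
    have notMixed_c : ¬ IsMixedCol i lam mu T' c := fun hmx' =>
      mT'1_c (colHasVal_iff.mp hmx'.2)
    have notMixed_c1 : ¬ IsMixedCol i lam mu T' (c + 1) := fun hmx' =>
      mT'i_c1 (colHasVal_iff.mp hmx'.1)
    have cond4 : ∀ a b, a < b → IsMixedCol i lam mu T' a → IsMixedCol i lam mu T' b →
        lowestLow i lam mu T' a ≤ lowestLow i lam mu T' b := by
      intro a b hab hma hmb
      have ha0 : a ≠ c := fun hh => notMixed_c (hh ▸ hma)
      have hb0 : b ≠ c := fun hh => notMixed_c (hh ▸ hmb)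
      have ha1 : a ≠ c + 1 := fun hh => notMixed_c1 (hh ▸ hma)
      have hb1 : b ≠ c + 1 := fun hh => notMixed_c1 (hh ▸ hmb)
      rw [lowestLow_congr (hsame a ha0 ha1), lowestLow_congr (hsame b hb0 hb1)]
      exact hmx a b hab ((mixed_congr (hsame a ha0 ha1)).mp hma)
        ((mixed_congr (hsame b hb0 hb1)).mp hmb)
    have hswap : ∀ v c', (∃ r, IsSkewCell lam mu r c' ∧ T' r c' = v) ↔
        (∃ r, IsSkewCell lam mu r (Equiv.swap c (c + 1) c') ∧
          T r (Equiv.swap c (c + 1) c') = v) := by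
      intro v c'
      by_cases h1 : c' = c
      · rw [h1, Equiv.swap_apply_left]
        by_cases hvi : v = i
        · rw [hvi]
          exact iff_of_true mT'i_c (colHasVal_iff.mp hPL.1)
        by_cases hv1 : v = i + 1
        · rw [hv1]
          exact iff_of_false mT'1_c fun hh => hPL.2 (colHasVal_iff.mpr hh)
        · refine iff_of_false ?_ ?_
          · rintro ⟨r, hr, he⟩
            rcases hparts.2.1 r c hr with hh | hh <;> omega
          · rintro ⟨r, hr, he⟩
            rcases hb r (c + 1) hr with hh | hh <;> omega
      by_cases h2 : c' = c + 1
      · rw [h2, Equiv.swap_apply_right]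
        by_cases hvi : v = i
        · rw [hvi]
          exact iff_of_false mT'i_c1 fun hh => hPH.2 (colHasVal_iff.mpr hh)
        by_cases hv1 : v = i + 1
        · rw [hv1]
          exact iff_of_true mT'1_c1 (colHasVal_iff.mp hPH.1)
        · refine iff_of_false ?_ ?_
          · rintro ⟨r, hr, he⟩
            rcases hparts.2.1 r (c + 1) hr with hh | hh <;> omega
          · rintro ⟨r, hr, he⟩
            rcases hb r c hr with hh | hh <;> omega
      · rw [Equiv.swap_apply_of_ne_of_ne h1 h2]
        simp only [hsame c' h1 h2]
    refine ⟨⟨hparts.1, hparts.2.1, hparts.2.2, cond4⟩, colCount_eq_of_swap hswap, ?_⟩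
    rintro r ⟨h1, h2, h3, h4⟩
    rw [val_c r h1] at h3
    omega
end
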